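/- arXiv:0904.2340 — 3 statements merged into one kernel-verified Lean document; each statement's English description precedes it below -/
import Mathlib

section
/- There exist labeled choiceless π-calculus processes E, F ∈ 𝒫ᵉ such that Unl(E) and Unl(F) are strongly bisimilar, yet E and F are not sfmust-equivalent and not wfmust-equivalent: there exists a labeled observer ρ ∈ 𝒪ᵉ (namely ρ = a_{v₃}.ω) with E sfmust ρ and E wfmust ρ, but neither F sfmust ρ nor F wfmust ρ. In particular this holds for E = (νc)(c̄_{w⁰₀} | !_{w⁰₁}c.(c̄ | ā)) | (νc)(c̄_{w⁰₂} | !_{w⁰₃}c.c̄) and F = !_{v⁰₀}((νb)(b̄ | b | b.ā)) | (νc)(c̄_{v⁰₁} | !_{v⁰₂}c.c̄). -/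
/- A formalization of the (choiceless) π-calculus with observers,
   its labeled version (à la Cacciagrano–Corradini–Palamidessi),
   fairness notions and testing semantics. -/

namespace PiFair

/-- Names are natural numbers. -/
abbrev Name := ℕ

/-- Action labels ⟨s,n⟩ ∈ {0,1}* × ℕ. -/
abbrev Label := List Bool × ℕ

/-- Unlabeled processes / observers.  Processes (𝒫) are the ω-free terms;
    observers (𝒪) may also use the success prefix ω. -/
inductive Proc : Type
  | nil : Proc
  | input : Name → Name → Proc → Proc        -- x(y).P
  | output : Name → Name → Proc → Proc       -- x̄y.P
  | omegaPre : Proc → Proc                   -- ω.P  (observers only)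
  | par : Proc → Proc → Proc
  | res : Name → Proc → Proc                 -- (νx)P
  | rep : Proc → Proc                        -- !P
  deriving DecidableEq

/-- Membership in 𝒫: no occurrence of the success prefix ω. -/
def Proc.noOmega : Proc → Prop
  | .nil => True
  | .input _ _ P => P.noOmega
  | .output _ _ P => P.noOmega
  | .omegaPre _ => False
  | .par P Q => P.noOmega ∧ Q.noOmega
  | .res _ P => P.noOmega
  | .rep P => P.noOmega

/-- Free names of a process. -/
def Proc.fn : Proc → Set Name
  | .nil => ∅
  | .input x y P => {x} ∪ (P.fn \ {y})
  | .output x y P => {x} ∪ {y} ∪ P.fn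
  | .omegaPre P => P.fn
  | .par P Q => P.fn ∪ Q.fn
  | .res x P => P.fn \ {x}
  | .rep P => P.fn

/-- (Naive) substitution P{z/y}: replace free occurrences of y by z. -/
def Proc.subst : Proc → Name → Name → Proc
  | .nil, _, _ => .nil
  | .input x w P, y, z =>
      .input (if x = y then z else x) w (if w = y then P else P.subst y z)
  | .output x w P, y, z =>
      .output (if x = y then z else x) (if w = y then z else w) (P.subst y z)
  | .omegaPre P, y, z => .omegaPre (P.subst y z)
  | .par P Q, y, z => .par (P.subst y z) (Q.subst y z)
  | .res x P, y, z => .res x (if x = y then P else P.subst y z)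
  | .rep P, y, z => .rep (P.subst y z)

/-- Transition labels μ: early input xy, output x̄y, bound output x̄(y), τ, and ω. -/
inductive Act : Type
  | inp : Name → Name → Act
  | out : Name → Name → Act
  | bout : Name → Name → Act
  | tau : Act
  | omega : Act
  deriving DecidableEq

/-- Bound names of an action. -/
def Act.bn : Act → Set Name
  | .bout _ y => {y}
  | _ => ∅

/-- Free names of an action. -/
def Act.fnA : Act → Set Name
  | .inp x y => {x, y}
  | .out x y => {x, y}
  | .bout x _ => {x}
  | _ => ∅

/-- All names of an action. -/
def Act.n (μ : Act) : Set Name := μ.fnA ∪ μ.bn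

/-- Early operational semantics for unlabeled terms
    (rules Input, Output, Open, Res, Par, Com, Close, Rep, plus ω). -/
inductive Step : Proc → Act → Proc → Prop
  | input : ∀ x y z P, Step (.input x y P) (.inp x z) (P.subst y z)
  | output : ∀ x y P, Step (.output x y P) (.out x y) P
  | open_ : ∀ x y P P', Step P (.out x y) P' → x ≠ y →
      Step (.res y P) (.bout x y) P'
  | res : ∀ y μ P P', Step P μ P' → y ∉ μ.n →
      Step (.res y P) μ (.res y P')
  | parL : ∀ μ P P' Q, Step P μ P' → (∀ y ∈ μ.bn, y ∉ Q.fn) →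
      Step (.par P Q) μ (.par P' Q)
  | parR : ∀ μ P Q Q', Step Q μ Q' → (∀ y ∈ μ.bn, y ∉ P.fn) →
      Step (.par P Q) μ (.par P Q')
  | comL : ∀ x y P P' Q Q', Step P (.inp x y) P' → Step Q (.out x y) Q' →
      Step (.par P Q) .tau (.par P' Q')
  | comR : ∀ x y P P' Q Q', Step P (.out x y) P' → Step Q (.inp x y) Q' →
      Step (.par P Q) .tau (.par P' Q')
  | closeL : ∀ x y P P' Q Q', Step P (.inp x y) P' → Step Q (.bout x y) Q' →
      y ∉ P.fn → Step (.par P Q) .tau (.res y (.par P' Q'))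
  | closeR : ∀ x y P P' Q Q', Step P (.bout x y) P' → Step Q (.inp x y) Q' →
      y ∉ Q.fn → Step (.par P Q) .tau (.res y (.par P Q'))
  | rep : ∀ μ P P', Step P μ P' → Step (.rep P) μ (.par P' (.rep P))
  | omega_ : ∀ P, Step (.omegaPre P) .omega P

/-- Ground labeled terms 𝒫ᵉ_gr: prefixes and replications carry a label;
    the body of a replication and of an ω prefix is an unlabeled term. -/
inductive LProc : Type
  | nil : LProc
  | input : Name → Name → Label → LProc → LProc   -- x(y)_{⟨s,n⟩}.E
  | output : Name → Name → Label → LProc → LProc  -- x̄y_{⟨s,n⟩}.E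
  | omegaPre : Proc → LProc                       -- ω.o (no label, per the paper)
  | par : LProc → LProc → LProc
  | res : Name → LProc → LProc
  | rep : Label → Proc → LProc                    -- !_{⟨s,n⟩}P
  deriving DecidableEq

/-- Labeled terms with no ω (labeled processes, as opposed to observers). -/
def LProc.noOmega : LProc → Prop
  | .nil => True
  | .input _ _ _ E => E.noOmega
  | .output _ _ _ E => E.noOmega
  | .omegaPre _ => False
  | .par E F => E.noOmega ∧ F.noOmega
  | .res _ E => E.noOmega
  | .rep _ P => P.noOmega

/-- The labeling function L_{⟨s,n⟩}(·). -/
def labelWith : Label → Proc → LProc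
  | _, .nil => .nil
  | l, .input x y P => .input x y l (labelWith (l.1, l.2 + 1) P)
  | l, .output x y P => .output x y l (labelWith (l.1, l.2 + 1) P)
  | _, .omegaPre P => .omegaPre P
  | l, .par P Q => .par (labelWith (l.1 ++ [false], l.2) P)
                       (labelWith (l.1 ++ [true], l.2) Q)
  | l, .res x P => .res x (labelWith l P)
  | l, .rep P => .rep l P

/-- The top-level labels top(E). -/
def LProc.top : LProc → Set Label
  | .nil => ∅
  | .input _ _ l _ => {l}
  | .output _ _ l _ => {l}
  | .omegaPre _ => ∅
  | .par E F => E.top ∪ F.top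
  | .res _ E => E.top
  | .rep l _ => {l}

/-- All labels lab(E). -/
def LProc.lab : LProc → Set Label
  | .nil => ∅
  | .input _ _ l E => {l} ∪ E.lab
  | .output _ _ l E => {l} ∪ E.lab
  | .omegaPre _ => ∅
  | .par E F => E.lab ∪ F.lab
  | .res _ E => E.lab
  | .rep l _ => {l}

/-- Number of occurrences of a label in a labeled term. -/
def LProc.labCount : LProc → Label → ℕ
  | .nil, _ => 0
  | .input _ _ l' E, l => (if l' = l then 1 else 0) + E.labCount l
  | .output _ _ l' E, l => (if l' = l then 1 else 0) + E.labCount l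
  | .omegaPre _, _ => 0
  | .par E F, l => E.labCount l + F.labCount l
  | .res _ E, l => E.labCount l
  | .rep l' _, l => if l' = l then 1 else 0

/-- The relation ℜ on label sets: string components pairwise prefix-incomparable. -/
def LabRel (L₀ L₁ : Set Label) : Prop :=
  ∀ l₀ ∈ L₀, ∀ l₁ ∈ L₁, ¬ l₀.1 <+: l₁.1 ∧ ¬ l₁.1 <+: l₀.1

/-- Well-formedness of ground labeled terms. -/
inductive Wf : LProc → Prop
  | nil : Wf .nil
  | prefIn : ∀ (l : Label) (x y : Name) (P : Proc),
      Wf (labelWith l (.input x y P))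
  | prefOut : ∀ (l : Label) (x y : Name) (P : Proc),
      Wf (labelWith l (.output x y P))
  | par : ∀ E₀ E₁, Wf E₀ → Wf E₁ → LabRel E₀.top E₁.top → Wf (.par E₀ E₁)
  | res : ∀ x E, Wf E → Wf (.res x E)
  | rep : ∀ (l : Label) (P : Proc), Wf (.rep l P)
  | omegaPre : ∀ (o : Proc), Wf (.omegaPre o)

/-- Free names of a labeled term. -/
def LProc.fn : LProc → Set Name
  | .nil => ∅
  | .input x y _ E => {x} ∪ (E.fn \ {y})
  | .output x y _ E => {x} ∪ {y} ∪ E.fn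
  | .omegaPre o => o.fn
  | .par E F => E.fn ∪ F.fn
  | .res x E => E.fn \ {x}
  | .rep _ P => P.fn

/-- Substitution on labeled terms. -/
def LProc.subst : LProc → Name → Name → LProc
  | .nil, _, _ => .nil
  | .input x w l E, y, z =>
      .input (if x = y then z else x) w l (if w = y then E else E.subst y z)
  | .output x w l E, y, z =>
      .output (if x = y then z else x) (if w = y then z else w) l (E.subst y z)
  | .omegaPre o, y, z => .omegaPre (o.subst y z)
  | .par E F, y, z => .par (E.subst y z) (F.subst y z)
  | .res x E, y, z => .res x (if x = y then E else E.subst y z)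
  | .rep l P, y, z => .rep l (P.subst y z)

/-- Label erasure Unl(·). -/
def LProc.unl : LProc → Proc
  | .nil => .nil
  | .input x y _ E => .input x y E.unl
  | .output x y _ E => .output x y E.unl
  | .omegaPre o => .omegaPre o
  | .par E F => .par E.unl F.unl
  | .res x E => .res x E.unl
  | .rep _ P => .rep P

/-- Operational semantics of labeled terms: as for unlabeled ones, ignoring
    labels, except replication, which relabels the unfolded copy. -/
inductive LStep : LProc → Act → LProc → Prop
  | input : ∀ x y z l E, LStep (.input x y l E) (.inp x z) (E.subst y z)
  | output : ∀ x y l E, LStep (.output x y l E) (.out x y) E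
  | open_ : ∀ x y E E', LStep E (.out x y) E' → x ≠ y →
      LStep (.res y E) (.bout x y) E'
  | res : ∀ y μ E E', LStep E μ E' → y ∉ μ.n →
      LStep (.res y E) μ (.res y E')
  | parL : ∀ μ E E' F, LStep E μ E' → (∀ y ∈ μ.bn, y ∉ F.fn) →
      LStep (.par E F) μ (.par E' F)
  | parR : ∀ μ E F F', LStep F μ F' → (∀ y ∈ μ.bn, y ∉ E.fn) →
      LStep (.par E F) μ (.par E F')
  | comL : ∀ x y E E' F F', LStep E (.inp x y) E' → LStep F (.out x y) F' →
      LStep (.par E F) .tau (.par E' F')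
  | comR : ∀ x y E E' F F', LStep E (.out x y) E' → LStep F (.inp x y) F' →
      LStep (.par E F) .tau (.par E' F')
  | closeL : ∀ x y E E' F F', LStep E (.inp x y) E' → LStep F (.bout x y) F' →
      y ∉ E.fn → LStep (.par E F) .tau (.res y (.par E' F'))
  | closeR : ∀ x y E E' F F', LStep E (.bout x y) E' → LStep F (.inp x y) F' →
      y ∉ F.fn → LStep (.par E F) .tau (.res y (.par E F'))
  | rep : ∀ μ (l : Label) (P P' : Proc), Step P μ P' →
      LStep (.rep l P) μ
        (.par (labelWith (l.1 ++ [false], l.2 + 1) P') (.rep (l.1 ++ [true], l.2 + 1) P))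
  | omega_ : ∀ o, LStep (.omegaPre o) .omega (labelWith ([], 0) o)

/-- The live predicate live(⟨s,n⟩, μ, S) of Table "Live labels". -/
inductive Live : Label → Act → LProc → Prop
  | input : ∀ (l : Label) x y z E, Live l (.inp x z) (.input x y l E)
  | output : ∀ (l : Label) x z E, Live l (.out x z) (.output x z l E)
  | res : ∀ l μ y E, Live l μ E → y ∉ μ.n → Live l μ (.res y E)
  | open_ : ∀ l x y E, Live l (.out x y) E → x ≠ y → Live l (.bout x y) (.res y E)
  | rep : ∀ (l : Label) μ (P P' : Proc), Step P μ P' → Live l μ (.rep l P)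
  | parL : ∀ l μ E F, Live l μ E → (∀ y ∈ μ.bn, y ∉ F.fn) → Live l μ (.par E F)
  | parR : ∀ l μ E F, Live l μ F → (∀ y ∈ μ.bn, y ∉ E.fn) → Live l μ (.par E F)
  | comL₁ : ∀ l l' x y E F, Live l (.inp x y) E → Live l' (.out x y) F →
      Live l .tau (.par E F)
  | comL₂ : ∀ l l' x y E F, Live l (.inp x y) E → Live l' (.out x y) F →
      Live l' .tau (.par E F)
  | comR₁ : ∀ l l' x y E F, Live l (.out x y) E → Live l' (.inp x y) F →
      Live l .tau (.par E F)
  | comR₂ : ∀ l l' x y E F, Live l (.out x y) E → Live l' (.inp x y) F →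
      Live l' .tau (.par E F)
  | closeL₁ : ∀ l l' x y E F, Live l (.inp x y) E → Live l' (.bout x y) F →
      y ∉ E.fn → Live l .tau (.par E F)
  | closeL₂ : ∀ l l' x y E F, Live l (.inp x y) E → Live l' (.bout x y) F →
      y ∉ E.fn → Live l' .tau (.par E F)
  | closeR₁ : ∀ l l' x y E F, Live l (.bout x y) E → Live l' (.inp x y) F →
      y ∉ F.fn → Live l .tau (.par E F)
  | closeR₂ : ∀ l l' x y E F, Live l (.bout x y) E → Live l' (.inp x y) F →
      y ∉ F.fn → Live l' .tau (.par E F)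

/-- Live labels Ll(S): labels live for τ. -/
def Ll (S : LProc) : Set Label := {v | Live v .tau S}

/-- A maximal computation w.r.t. a step relation, represented as an infinite
    sequence which stutters on a final stuck state when finite. -/
structure MaxComp {α : Type} (step : α → α → Prop) (s : α) where
  seq : ℕ → α
  init : seq 0 = s
  succ : ∀ i, step (seq i) (seq (i + 1)) ∨
    ((∀ t, ¬ step (seq i) t) ∧ seq (i + 1) = seq i)

/-- τ-step relation on unlabeled terms. -/
def TauStep (P Q : Proc) : Prop := Step P .tau Q

/-- τ-step relation on labeled terms. -/
def LTauStep (E F : LProc) : Prop := LStep E .tau F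

/-- A maximal τ-computation (labeled) is weak-fair: no label is
    continuously live from some point on. -/
def WeakFair {S : LProc} (c : MaxComp LTauStep S) : Prop :=
  ∀ v : Label, ∀ i : ℕ, ∃ j ≥ i, v ∉ Ll (c.seq j)

/-- A maximal τ-computation (labeled) is strong-fair: every label is
    eventually never live. -/
def StrongFair {S : LProc} (c : MaxComp LTauStep S) : Prop :=
  ∀ v : Label, ∃ i : ℕ, ∀ j ≥ i, v ∉ Ll (c.seq j)

/-- A labeled computation is successful: some state enables ω. -/
def LSuccess {S : LProc} (c : MaxComp LTauStep S) : Prop :=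
  ∃ i, ∃ T, LStep (c.seq i) .omega T

/-- An unlabeled computation is successful: some state enables ω. -/
def PSuccess {T : Proc} (c : MaxComp TauStep T) : Prop :=
  ∃ i, ∃ T', Step (c.seq i) .omega T'

/-- P must o. -/
def Must (P o : Proc) : Prop :=
  ∀ c : MaxComp TauStep (.par P o), PSuccess c

/-- Weak τ-reachability. -/
def TauStar : Proc → Proc → Prop := Relation.ReflTransGen TauStep

/-- P fair o: along every maximal computation, every state can reach,
    in finitely many τ-steps, a state with ω enabled. -/
def FairT (P o : Proc) : Prop :=
  ∀ c : MaxComp TauStep (.par P o), ∀ i : ℕ,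
    ∃ T T', TauStar (c.seq i) T ∧ Step T .omega T'

/-- E sfmust ρ: every strong-fair computation from E|ρ is successful. -/
def SfMust (E ρ : LProc) : Prop :=
  ∀ c : MaxComp LTauStep (.par E ρ), StrongFair c → LSuccess c

/-- E wfmust ρ: every weak-fair computation from E|ρ is successful. -/
def WfMust (E ρ : LProc) : Prop :=
  ∀ c : MaxComp LTauStep (.par E ρ), WeakFair c → LSuccess c

/-- Strong bisimulations on unlabeled terms. -/
def IsBisim (R : Proc → Proc → Prop) : Prop :=
  ∀ P Q, R P Q →
    (∀ μ P', Step P μ P' → ∃ Q', Step Q μ Q' ∧ R P' Q') ∧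
    (∀ μ Q', Step Q μ Q' → ∃ P', Step P μ P' ∧ R P' Q')

/-- Strong bisimilarity. -/
def Bisimilar (P Q : Proc) : Prop := ∃ R, IsBisim R ∧ R P Q

end PiFair
namespace PiFair

/-! ### Concrete processes -/

abbrev aOut : Proc := .output 0 3 .nil
abbrev ctP : Proc := .output 2 3 .nil
abbrev bodyA : Proc := .input 2 3 (.par ctP aOut)
abbrev bodyC : Proc := .input 2 3 ctP
abbrev bodyB : Proc := .res 1 (.par (.output 1 3 .nil)
  (.par (.input 1 3 .nil) (.input 1 3 aOut)))
abbrev dB0 : Proc := .res 1 (.par .nil (.par .nil (.input 1 3 aOut)))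
abbrev dB1 : Proc := .res 1 (.par .nil (.par (.input 1 3 .nil) aOut))
abbrev dB2 : Proc := .res 1 (.par .nil (.par (.input 1 3 .nil) .nil))

/-! ### Unlabeled invariants -/

inductive Gb : Proc → ℕ → Prop
  | nil : Gb .nil 0
  | aO : Gb aOut 1
  | par {g h m n k} : Gb g m → Gb h n → k = m + n → Gb (.par g h) k

inductive CtT : Proc → ℕ → Prop
  | ct : CtT ctP 0
  | parL {g h m n k} : CtT g m → Gb h n → k = m + n → CtT (.par g h) k
  | parR {g h m n k} : Gb g m → CtT h n → k = m + n → CtT (.par g h) k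

inductive AT : Proc → ℕ → Prop
  | mk {g n} : CtT g n → AT (.par g (.rep bodyA)) n
  | pad {g Q m n k} : Gb g m → AT Q n → k = m + n → AT (.par g Q) k

inductive CT : Proc → Prop
  | base : CT (.par ctP (.rep bodyC))
  | pad {Q} : CT Q → CT (.par .nil Q)

inductive Rs : Proc → ℕ → Prop
  | d0 : Rs dB0 0
  | d1 : Rs dB1 1
  | d2 : Rs dB2 0

inductive BT : Proc → ℕ → Prop
  | base : BT (.rep bodyB) 0
  | cons {d Q m n k} : Rs d m → BT Q n → k = m + n → BT (.par d Q) k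

/-! ### Basic step inversions -/

lemma stepA_body {μ P'} (h : Step bodyA μ P') :
    ∃ z, μ = .inp 2 z ∧ P' = .par (.output 2 z .nil) (.output 0 z .nil) := by
  cases h with
  | input x y z P => exact ⟨z, rfl, by simp [Proc.subst]⟩

lemma stepC_body {μ P'} (h : Step bodyC μ P') :
    ∃ z, μ = .inp 2 z ∧ P' = .output 2 z .nil := by
  cases h with
  | input x y z P => exact ⟨z, rfl, by simp [Proc.subst]⟩

lemma one_mem_out13 : (1 : Name) ∈ (Act.out 1 3).n := by
  simp [Act.n, Act.fnA, Act.bn]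

lemma one_mem_inp1 {z} : (1 : Name) ∈ (Act.inp 1 z).n := by
  simp [Act.n, Act.fnA, Act.bn]

lemma stepB_body {μ P'} (h : Step bodyB μ P') :
    μ = .tau ∧ (P' = dB0 ∨ P' = dB1) := by
  cases h with
  | open_ x y P P' h hxy =>
    cases h with
    | parL μ P P' Q h hb => cases h
    | parR μ P Q Q' h hb =>
      cases h with
      | parL μ P P' Q h hb => cases h
      | parR μ P Q Q' h hb => cases h
  | res y μ P P' h hy =>
    cases h with
    | parL μ P P' Q h hb => cases h; exact absurd one_mem_out13 hy
    | parR μ P Q Q' h hb =>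
      cases h with
      | parL μ P P' Q h hb => cases h; exact absurd one_mem_inp1 hy
      | parR μ P Q Q' h hb => cases h; exact absurd one_mem_inp1 hy
      | comL x y P P' Q Q' h1 h2 => cases h2
      | comR x y P P' Q Q' h1 h2 => cases h1
      | closeL x y P P' Q Q' h1 h2 hy => cases h2
      | closeR x y P P' Q Q' h1 h2 hy => cases h1
    | comL x y P P' Q Q' h1 h2 => cases h1
    | comR x y P P' Q Q' h1 h2 =>
      cases h1
      cases h2 with
      | parL μ P P' Q h hb =>
        cases h
        exact ⟨rfl, Or.inl (by simp [Proc.subst])⟩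
      | parR μ P Q Q' h hb =>
        cases h
        exact ⟨rfl, Or.inr (by simp [Proc.subst])⟩
    | closeL x y P P' Q Q' h1 h2 hy => cases h1
    | closeR x y P P' Q Q' h1 h2 hy => cases h1

end PiFair

namespace PiFair

lemma bnP {μ : Act} (hμ : μ.bn = (∅ : Set Name)) {P : Proc} :
    ∀ z ∈ μ.bn, z ∉ P.fn := by intro z hz; rw [hμ] at hz; exact absurd hz (Set.notMem_empty z)

lemma bn_out {x y : Name} : (Act.out x y).bn = (∅ : Set Name) := rfl
lemma bn_inp {x y : Name} : (Act.inp x y).bn = (∅ : Set Name) := rfl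
lemma bn_tau : (Act.tau).bn = (∅ : Set Name) := rfl

lemma two_nmem_tau : (2 : Name) ∉ (Act.tau).n := by
  simp [Act.n, Act.fnA, Act.bn]
lemma two_nmem_out03 : (2 : Name) ∉ (Act.out 0 3).n := by
  simp [Act.n, Act.fnA, Act.bn]
lemma two_mem_out23 : (2 : Name) ∈ (Act.out 2 3).n := by
  simp [Act.n, Act.fnA, Act.bn]
lemma two_mem_inp2 {z : Name} : (2 : Name) ∈ (Act.inp 2 z).n := by
  simp [Act.n, Act.fnA, Act.bn]

lemma gb_step {g n μ g'} (hg : Gb g n) (h : Step g μ g') :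
    μ = .out 0 3 ∧ ∃ m, n = m + 1 ∧ Gb g' m := by
  induction hg generalizing μ g' with
  | nil => cases h
  | aO => cases h; exact ⟨rfl, 0, rfl, Gb.nil⟩
  | @par g h a b k hg hh e ihg ihh =>
    cases h with
    | parL μ P P' Q h hb =>
      obtain ⟨hμ, m, hm, h'⟩ := ihg h
      exact ⟨hμ, m + b, by omega, Gb.par h' hh rfl⟩
    | parR μ P Q Q' h hb =>
      obtain ⟨hμ, m, hm, h'⟩ := ihh h
      exact ⟨hμ, a + m, by omega, Gb.par hg h' rfl⟩
    | comL x y P P' Q Q' h1 h2 => obtain ⟨hμ, _⟩ := ihg h1; simp at hμ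
    | comR x y P P' Q Q' h1 h2 => obtain ⟨hμ, _⟩ := ihh h2; simp at hμ
    | closeL x y P P' Q Q' h1 h2 hy => obtain ⟨hμ, _⟩ := ihg h1; simp at hμ
    | closeR x y P P' Q Q' h1 h2 hy => obtain ⟨hμ, _⟩ := ihg h1; simp at hμ

lemma ctT_step {g n μ g'} (hg : CtT g n) (h : Step g μ g') :
    (μ = .out 2 3 ∧ Gb g' n) ∨ (μ = .out 0 3 ∧ ∃ m, n = m + 1 ∧ CtT g' m) := by
  induction hg generalizing μ g' with
  | ct => cases h; exact Or.inl ⟨rfl, Gb.nil⟩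
  | @parL g h a b k hg hh e ihg =>
    cases h with
    | parL μ P P' Q h hb =>
      rcases ihg h with ⟨hμ, h'⟩ | ⟨hμ, m, hm, h'⟩
      · exact Or.inl ⟨hμ, Gb.par h' hh (by omega)⟩
      · exact Or.inr ⟨hμ, m + b, by omega, CtT.parL h' hh rfl⟩
    | parR μ P Q Q' h hb =>
      obtain ⟨hμ, m, hm, h'⟩ := gb_step hh h
      exact Or.inr ⟨hμ, a + m, by omega, CtT.parL hg h' rfl⟩
    | comL x y P P' Q Q' h1 h2 =>
      rcases ihg h1 with ⟨hμ, _⟩ | ⟨hμ, _⟩ <;> simp at hμ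
    | comR x y P P' Q Q' h1 h2 => obtain ⟨hμ, _⟩ := gb_step hh h2; simp at hμ
    | closeL x y P P' Q Q' h1 h2 hy =>
      rcases ihg h1 with ⟨hμ, _⟩ | ⟨hμ, _⟩ <;> simp at hμ
    | closeR x y P P' Q Q' h1 h2 hy =>
      rcases ihg h1 with ⟨hμ, _⟩ | ⟨hμ, _⟩ <;> simp at hμ
  | @parR g h a b k hg hh e ihh =>
    cases h with
    | parL μ P P' Q h hb =>
      obtain ⟨hμ, m, hm, h'⟩ := gb_step hg h
      exact Or.inr ⟨hμ, m + b, by omega, CtT.parR h' hh rfl⟩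
    | parR μ P Q Q' h hb =>
      rcases ihh h with ⟨hμ, h'⟩ | ⟨hμ, m, hm, h'⟩
      · exact Or.inl ⟨hμ, Gb.par hg h' (by omega)⟩
      · exact Or.inr ⟨hμ, a + m, by omega, CtT.parR hg h' rfl⟩
    | comL x y P P' Q Q' h1 h2 => obtain ⟨hμ, _⟩ := gb_step hg h1; simp at hμ
    | comR x y P P' Q Q' h1 h2 =>
      rcases ihh h2 with ⟨hμ, _⟩ | ⟨hμ, _⟩ <;> simp at hμ
    | closeL x y P P' Q Q' h1 h2 hy => obtain ⟨hμ, _⟩ := gb_step hg h1; simp at hμ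
    | closeR x y P P' Q Q' h1 h2 hy => obtain ⟨hμ, _⟩ := gb_step hg h1; simp at hμ

lemma at_step {Q n μ Q'} (hq : AT Q n) (h : Step Q μ Q') :
    (μ = .tau ∧ AT Q' (n + 1)) ∨ (μ = .out 0 3 ∧ ∃ m, n = m + 1 ∧ AT Q' m) ∨
      (μ = .out 2 3) ∨ (∃ z, μ = .inp 2 z) := by
  induction hq generalizing μ Q' with
  | @mk g n hg =>
    cases h with
    | parL μ P P' Q h hb =>
      rcases ctT_step hg h with ⟨hμ, h'⟩ | ⟨hμ, m, hm, h'⟩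
      · exact Or.inr (Or.inr (Or.inl hμ))
      · exact Or.inr (Or.inl ⟨hμ, m, hm, AT.mk h'⟩)
    | parR μ P Q Q' h hb =>
      cases h with
      | rep μ P P' h =>
        obtain ⟨z, hμ, _⟩ := stepA_body h
        exact Or.inr (Or.inr (Or.inr ⟨z, hμ⟩))
    | comL x y P P' Q Q' h1 h2 =>
      rcases ctT_step hg h1 with ⟨hμ, _⟩ | ⟨hμ, _⟩ <;> simp at hμ
    | comR x y P P' Q Q' h1 h2 =>
      rcases ctT_step hg h1 with ⟨hμ, h'⟩ | ⟨hμ, m, hm, h'⟩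
      · obtain ⟨rfl, rfl⟩ : x = 2 ∧ y = 3 := by simpa using hμ
        cases h2 with
        | rep μ P P' h =>
          obtain ⟨z, hμ', hP⟩ := stepA_body h
          obtain rfl : (3 : Name) = z := by simpa using hμ'
          subst hP
          exact Or.inl ⟨rfl, AT.pad h' (AT.mk (CtT.parL CtT.ct Gb.aO rfl)) (by omega)⟩
      · obtain ⟨rfl, rfl⟩ : x = 0 ∧ y = 3 := by simpa using hμ
        cases h2 with
        | rep μ P P' h => obtain ⟨z, hμ', _⟩ := stepA_body h; simp at hμ'
    | closeL x y P P' Q Q' h1 h2 hy =>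
      cases h2 with
      | rep μ P P' h => obtain ⟨z, hμ', _⟩ := stepA_body h; simp at hμ'
    | closeR x y P P' Q Q' h1 h2 hy =>
      rcases ctT_step hg h1 with ⟨hμ, _⟩ | ⟨hμ, _⟩ <;> simp at hμ
  | @pad g R a b k hg hr e ihr =>
    cases h with
    | parL μ P P' Q h hb =>
      obtain ⟨hμ, m, hm, h'⟩ := gb_step hg h
      exact Or.inr (Or.inl ⟨hμ, m + b, by omega, AT.pad h' hr rfl⟩)
    | parR μ P Q Q' h hb =>
      rcases ihr h with ⟨hμ, h'⟩ | ⟨hμ, m, hm, h'⟩ | hμ | hμ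
      · exact Or.inl ⟨hμ, AT.pad hg h' (by omega)⟩
      · exact Or.inr (Or.inl ⟨hμ, a + m, by omega, AT.pad hg h' rfl⟩)
      · exact Or.inr (Or.inr (Or.inl hμ))
      · exact Or.inr (Or.inr (Or.inr hμ))
    | comL x y P P' Q Q' h1 h2 => obtain ⟨hμ, _⟩ := gb_step hg h1; simp at hμ
    | comR x y P P' Q Q' h1 h2 =>
      obtain ⟨hμ, _⟩ := gb_step hg h1
      obtain ⟨rfl, rfl⟩ : x = 0 ∧ y = 3 := by simpa using hμ
      rcases ihr h2 with ⟨hμ', _⟩ | ⟨hμ', _⟩ | hμ' | ⟨z, hμ'⟩ <;> simp at hμ'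
    | closeL x y P P' Q Q' h1 h2 hy => obtain ⟨hμ, _⟩ := gb_step hg h1; simp at hμ
    | closeR x y P P' Q Q' h1 h2 hy => obtain ⟨hμ, _⟩ := gb_step hg h1; simp at hμ

lemma ct_step {Q μ Q'} (hq : CT Q) (h : Step Q μ Q') :
    (μ = .out 2 3) ∨ (∃ z, μ = .inp 2 z) ∨ (μ = .tau ∧ CT Q') := by
  induction hq generalizing μ Q' with
  | base =>
    cases h with
    | parL μ P P' Q h hb => cases h; exact Or.inl rfl
    | parR μ P Q Q' h hb =>
      cases h with
      | rep μ P P' h => obtain ⟨z, hμ, _⟩ := stepC_body h; exact Or.inr (Or.inl ⟨z, hμ⟩)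
    | comL x y P P' Q Q' h1 h2 => cases h1
    | comR x y P P' Q Q' h1 h2 =>
      cases h1
      cases h2 with
      | rep μ P P' h =>
        obtain ⟨z, hμ', hP⟩ := stepC_body h
        obtain rfl : (3 : Name) = z := by simpa using hμ'
        subst hP
        exact Or.inr (Or.inr ⟨rfl, CT.pad CT.base⟩)
    | closeL x y P P' Q Q' h1 h2 hy =>
      cases h2 with
      | rep μ P P' h => obtain ⟨z, hμ', _⟩ := stepC_body h; simp at hμ'
    | closeR x y P P' Q Q' h1 h2 hy => cases h1
  | @pad R hr ihr =>
    cases h with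
    | parL μ P P' Q h hb => cases h
    | parR μ P Q Q' h hb =>
      rcases ihr h with hμ | hμ | ⟨hμ, h'⟩
      · exact Or.inl hμ
      · exact Or.inr (Or.inl hμ)
      · exact Or.inr (Or.inr ⟨hμ, CT.pad h'⟩)
    | comL x y P P' Q Q' h1 h2 => cases h1
    | comR x y P P' Q Q' h1 h2 => cases h1
    | closeL x y P P' Q Q' h1 h2 hy => cases h1
    | closeR x y P P' Q Q' h1 h2 hy => cases h1

end PiFair

namespace PiFair

lemma rs_step {d m μ d'} (hr : Rs d m) (h : Step d μ d') :
    μ = .out 0 3 ∧ m = 1 ∧ Rs d' 0 := by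
  cases hr with
  | d0 =>
    cases h with
    | open_ x y P P' h hxy =>
      cases h with
      | parL μ P P' Q h hb => cases h
      | parR μ P Q Q' h hb =>
        cases h with
        | parL μ P P' Q h hb => cases h
        | parR μ P Q Q' h hb => cases h
    | res y μ P P' h hy =>
      cases h with
      | parL μ P P' Q h hb => cases h
      | parR μ P Q Q' h hb =>
        cases h with
        | parL μ P P' Q h hb => cases h
        | parR μ P Q Q' h hb => cases h; exact absurd one_mem_inp1 hy
        | comL x y P P' Q Q' h1 h2 => cases h1
        | comR x y P P' Q Q' h1 h2 => cases h1
        | closeL x y P P' Q Q' h1 h2 hy => cases h1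
        | closeR x y P P' Q Q' h1 h2 hy => cases h1
      | comL x y P P' Q Q' h1 h2 => cases h1
      | comR x y P P' Q Q' h1 h2 => cases h1
      | closeL x y P P' Q Q' h1 h2 hy => cases h1
      | closeR x y P P' Q Q' h1 h2 hy => cases h1
  | d1 =>
    cases h with
    | open_ x y P P' h hxy =>
      cases h with
      | parL μ P P' Q h hb => cases h
      | parR μ P Q Q' h hb =>
        cases h with
        | parL μ P P' Q h hb => cases h
        | parR μ P Q Q' h hb => cases h
    | res y μ P P' h hy =>
      cases h with
      | parL μ P P' Q h hb => cases h
      | parR μ P Q Q' h hb =>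
        cases h with
        | parL μ P P' Q h hb => cases h; exact absurd one_mem_inp1 hy
        | parR μ P Q Q' h hb => cases h; exact ⟨rfl, rfl, Rs.d2⟩
        | comL x y P P' Q Q' h1 h2 => cases h2; cases h1
        | comR x y P P' Q Q' h1 h2 => cases h1
        | closeL x y P P' Q Q' h1 h2 hy => cases h2
        | closeR x y P P' Q Q' h1 h2 hy => cases h1
      | comL x y P P' Q Q' h1 h2 => cases h1
      | comR x y P P' Q Q' h1 h2 => cases h1
      | closeL x y P P' Q Q' h1 h2 hy => cases h1
      | closeR x y P P' Q Q' h1 h2 hy => cases h1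
  | d2 =>
    cases h with
    | open_ x y P P' h hxy =>
      cases h with
      | parL μ P P' Q h hb => cases h
      | parR μ P Q Q' h hb =>
        cases h with
        | parL μ P P' Q h hb => cases h
        | parR μ P Q Q' h hb => cases h
    | res y μ P P' h hy =>
      cases h with
      | parL μ P P' Q h hb => cases h
      | parR μ P Q Q' h hb =>
        cases h with
        | parL μ P P' Q h hb => cases h; exact absurd one_mem_inp1 hy
        | parR μ P Q Q' h hb => cases h
        | comL x y P P' Q Q' h1 h2 => cases h2
        | comR x y P P' Q Q' h1 h2 => cases h1
        | closeL x y P P' Q Q' h1 h2 hy => cases h2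
        | closeR x y P P' Q Q' h1 h2 hy => cases h1
      | comL x y P P' Q Q' h1 h2 => cases h1
      | comR x y P P' Q Q' h1 h2 => cases h1
      | closeL x y P P' Q Q' h1 h2 hy => cases h1
      | closeR x y P P' Q Q' h1 h2 hy => cases h1

lemma bt_step {Q n μ Q'} (hq : BT Q n) (h : Step Q μ Q') :
    (μ = .tau ∧ (BT Q' n ∨ BT Q' (n + 1))) ∨
      (μ = .out 0 3 ∧ ∃ m, n = m + 1 ∧ BT Q' m) := by
  induction hq generalizing μ Q' with
  | base =>
    cases h with
    | rep μ P P' h =>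
      obtain ⟨rfl, hP⟩ := stepB_body h
      rcases hP with rfl | rfl
      · exact Or.inl ⟨rfl, Or.inl (BT.cons Rs.d0 BT.base rfl)⟩
      · exact Or.inl ⟨rfl, Or.inr (BT.cons Rs.d1 BT.base rfl)⟩
  | @cons d R a b k hd hr e ihr =>
    cases h with
    | parL μ P P' Q h hb =>
      obtain ⟨hμ, ha, h'⟩ := rs_step hd h
      exact Or.inr ⟨hμ, b, by omega, BT.cons h' hr (by omega)⟩
    | parR μ P Q Q' h hb =>
      rcases ihr h with ⟨hμ, h'⟩ | ⟨hμ, m, hm, h'⟩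
      · rcases h' with h' | h'
        · exact Or.inl ⟨hμ, Or.inl (BT.cons hd h' (by omega))⟩
        · exact Or.inl ⟨hμ, Or.inr (BT.cons hd h' (by omega))⟩
      · exact Or.inr ⟨hμ, a + m, by omega, BT.cons hd h' rfl⟩
    | comL x y P P' Q Q' h1 h2 => obtain ⟨hμ, _⟩ := rs_step hd h1; simp at hμ
    | comR x y P P' Q Q' h1 h2 =>
      rcases ihr h2 with ⟨hμ, _⟩ | ⟨hμ, _⟩ <;> simp at hμ
    | closeL x y P P' Q Q' h1 h2 hy => obtain ⟨hμ, _⟩ := rs_step hd h1; simp at hμ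
    | closeR x y P P' Q Q' h1 h2 hy => obtain ⟨hμ, _⟩ := rs_step hd h1; simp at hμ

/-! ### Realization lemmas -/

lemma ctT_out {g n} (hg : CtT g n) : ∃ g', Step g (.out 2 3) g' ∧ Gb g' n := by
  induction hg with
  | ct => exact ⟨.nil, Step.output 2 3 .nil, Gb.nil⟩
  | @parL g h a b k hg hh e ih =>
    obtain ⟨g', hs, h'⟩ := ih
    exact ⟨.par g' h, Step.parL _ _ _ _ hs (bnP bn_out), Gb.par h' hh e⟩
  | @parR g h a b k hg hh e ih =>
    obtain ⟨h', hs, h2⟩ := ih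
    exact ⟨.par g h', Step.parR _ _ _ _ hs (bnP bn_out), Gb.par hg h2 e⟩

lemma gb_out {g n m} (hg : Gb g n) (hn : n = m + 1) :
    ∃ g', Step g (.out 0 3) g' ∧ Gb g' m := by
  induction hg generalizing m with
  | nil => omega
  | aO =>
    obtain rfl : m = 0 := by omega
    exact ⟨.nil, Step.output 0 3 .nil, Gb.nil⟩
  | @par g h a b k hg hh e ihg ihh =>
    rcases Nat.eq_zero_or_pos a with ha | ha
    · obtain ⟨b', rfl⟩ : ∃ b', b = b' + 1 := ⟨b - 1, by omega⟩
      obtain ⟨h', hs, h2⟩ := ihh rfl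
      exact ⟨.par g h', Step.parR _ _ _ _ hs (bnP bn_out), Gb.par hg h2 (by omega)⟩
    · obtain ⟨a', rfl⟩ : ∃ a', a = a' + 1 := ⟨a - 1, by omega⟩
      obtain ⟨g', hs, h2⟩ := ihg rfl
      exact ⟨.par g' h, Step.parL _ _ _ _ hs (bnP bn_out), Gb.par h2 hh (by omega)⟩

lemma ctT_out03 {g n m} (hg : CtT g n) (hn : n = m + 1) :
    ∃ g', Step g (.out 0 3) g' ∧ CtT g' m := by
  induction hg generalizing m with
  | ct => omega
  | @parL g h a b k hg hh e ih =>
    rcases Nat.eq_zero_or_pos b with hb | hb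
    · obtain ⟨a', rfl⟩ : ∃ a', a = a' + 1 := ⟨a - 1, by omega⟩
      obtain ⟨g', hs, h2⟩ := ih rfl
      exact ⟨.par g' h, Step.parL _ _ _ _ hs (bnP bn_out), CtT.parL h2 hh (by omega)⟩
    · obtain ⟨b', rfl⟩ : ∃ b', b = b' + 1 := ⟨b - 1, by omega⟩
      obtain ⟨h', hs, h2⟩ := gb_out hh rfl
      exact ⟨.par g h', Step.parR _ _ _ _ hs (bnP bn_out), CtT.parL hg h2 (by omega)⟩
  | @parR g h a b k hg hh e ih =>
    rcases Nat.eq_zero_or_pos a with ha | ha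
    · obtain ⟨b', rfl⟩ : ∃ b', b = b' + 1 := ⟨b - 1, by omega⟩
      obtain ⟨h', hs, h2⟩ := ih rfl
      exact ⟨.par g h', Step.parR _ _ _ _ hs (bnP bn_out), CtT.parR hg h2 (by omega)⟩
    · obtain ⟨a', rfl⟩ : ∃ a', a = a' + 1 := ⟨a - 1, by omega⟩
      obtain ⟨g', hs, h2⟩ := gb_out hg rfl
      exact ⟨.par g' h, Step.parL _ _ _ _ hs (bnP bn_out), CtT.parR h2 hh (by omega)⟩

lemma rep_bodyA_inp :
    Step (.rep bodyA) (.inp 2 3) (.par (.par ctP aOut) (.rep bodyA)) := by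
  have h : Step bodyA (.inp 2 3) ((Proc.par ctP aOut).subst 3 3) := Step.input 2 3 3 _
  simpa [Proc.subst] using Step.rep _ _ _ h

lemma at_tau {Q n} (hq : AT Q n) : ∃ Q', Step Q .tau Q' ∧ AT Q' (n + 1) := by
  induction hq with
  | @mk g n hg =>
    obtain ⟨g', hs, h'⟩ := ctT_out hg
    exact ⟨.par g' (.par (.par ctP aOut) (.rep bodyA)),
      Step.comR 2 3 _ _ _ _ hs rep_bodyA_inp,
      AT.pad h' (AT.mk (CtT.parL CtT.ct Gb.aO rfl)) (by omega)⟩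
  | @pad g R a b k hg hr e ih =>
    obtain ⟨R', hs, h'⟩ := ih
    exact ⟨.par g R', Step.parR _ _ _ _ hs (bnP bn_tau), AT.pad hg h' (by omega)⟩

lemma at_out {Q n m} (hq : AT Q n) (hn : n = m + 1) :
    ∃ Q', Step Q (.out 0 3) Q' ∧ AT Q' m := by
  induction hq generalizing m with
  | @mk g n hg =>
    obtain ⟨g', hs, h'⟩ := ctT_out03 hg hn
    exact ⟨.par g' (.rep bodyA), Step.parL _ _ _ _ hs (bnP bn_out), AT.mk h'⟩
  | @pad g R a b k hg hr e ih =>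
    rcases Nat.eq_zero_or_pos a with ha | ha
    · obtain ⟨b', rfl⟩ : ∃ b', b = b' + 1 := ⟨b - 1, by omega⟩
      obtain ⟨R', hs, h'⟩ := ih rfl
      exact ⟨.par g R', Step.parR _ _ _ _ hs (bnP bn_out), AT.pad hg h' (by omega)⟩
    · obtain ⟨a', rfl⟩ : ∃ a', a = a' + 1 := ⟨a - 1, by omega⟩
      obtain ⟨g', hs, h'⟩ := gb_out hg rfl
      exact ⟨.par g' R, Step.parL _ _ _ _ hs (bnP bn_out), AT.pad h' hr (by omega)⟩

lemma rep_bodyC_inp :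
    Step (.rep bodyC) (.inp 2 3) (.par ctP (.rep bodyC)) := by
  have h : Step bodyC (.inp 2 3) (ctP.subst 3 3) := Step.input 2 3 3 _
  simpa [Proc.subst] using Step.rep _ _ _ h

lemma ct_tau {Q} (hq : CT Q) : ∃ Q', Step Q .tau Q' ∧ CT Q' := by
  induction hq with
  | base =>
    exact ⟨.par .nil (.par ctP (.rep bodyC)),
      Step.comR 2 3 _ _ _ _ (Step.output 2 3 .nil) rep_bodyC_inp, CT.pad CT.base⟩
  | @pad R hr ih =>
    obtain ⟨R', hs, h'⟩ := ih
    exact ⟨.par .nil R', Step.parR _ _ _ _ hs (bnP bn_tau), CT.pad h'⟩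

lemma step_bodyB_tau1 : Step bodyB .tau dB1 := by
  have h2 : Step (Proc.par (.input 1 3 .nil) (.input 1 3 aOut)) (.inp 1 3)
      (Proc.par (.input 1 3 .nil) aOut) := by
    have := Step.input 1 3 3 aOut
    simpa [Proc.subst] using Step.parR _ _ _ _ this (bnP bn_inp)
  exact Step.res 1 .tau _ _ (Step.comR 1 3 _ _ _ _ (Step.output 1 3 .nil) h2)
    (by simp [Act.n, Act.fnA, Act.bn])

lemma step_bodyB_tau0 : Step bodyB .tau dB0 := by
  have h2 : Step (Proc.par (.input 1 3 .nil) (.input 1 3 aOut)) (.inp 1 3)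
      (Proc.par .nil (.input 1 3 aOut)) := by
    have := Step.input 1 3 3 (Proc.nil)
    simpa [Proc.subst] using Step.parL _ _ _ _ this (bnP bn_inp)
  exact Step.res 1 .tau _ _ (Step.comR 1 3 _ _ _ _ (Step.output 1 3 .nil) h2)
    (by simp [Act.n, Act.fnA, Act.bn])

lemma bt_tau1 {Q n} (hq : BT Q n) : ∃ Q', Step Q .tau Q' ∧ BT Q' (n + 1) := by
  induction hq with
  | base =>
    exact ⟨.par dB1 (.rep bodyB), Step.rep _ _ _ step_bodyB_tau1,
      BT.cons Rs.d1 BT.base rfl⟩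
  | @cons d R a b k hd hr e ih =>
    obtain ⟨R', hs, h'⟩ := ih
    exact ⟨.par d R', Step.parR _ _ _ _ hs (bnP bn_tau), BT.cons hd h' (by omega)⟩

lemma bt_out {Q n m} (hq : BT Q n) (hn : n = m + 1) :
    ∃ Q', Step Q (.out 0 3) Q' ∧ BT Q' m := by
  induction hq generalizing m with
  | base => omega
  | @cons d R a b k hd hr e ih =>
    rcases Nat.eq_zero_or_pos a with ha | ha
    · obtain ⟨b', rfl⟩ : ∃ b', b = b' + 1 := ⟨b - 1, by omega⟩
      obtain ⟨R', hs, h'⟩ := ih rfl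
      exact ⟨.par d R', Step.parR _ _ _ _ hs (bnP bn_out), BT.cons hd h' (by omega)⟩
    · obtain rfl : a = 1 := by cases hd <;> omega
      cases hd with
      | d1 =>
        have hs : Step dB1 (.out 0 3) dB2 := by
          refine Step.res 1 (.out 0 3) _ _ ?_ (by simp [Act.n, Act.fnA, Act.bn])
          exact Step.parR _ _ _ _ (Step.parR _ _ _ _ (Step.output 0 3 .nil)
            (bnP bn_out)) (bnP bn_out)
        exact ⟨.par dB2 R, Step.parL _ _ _ _ hs (bnP bn_out), BT.cons Rs.d2 hr (by omega)⟩

end PiFair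

namespace PiFair

def AS (P : Proc) (n : ℕ) : Prop := ∃ Q, AT Q n ∧ P = .res 2 Q
def CS (P : Proc) : Prop := ∃ Q, CT Q ∧ P = .res 2 Q

lemma as_step {P n μ P'} (hp : AS P n) (h : Step P μ P') :
    (μ = .tau ∧ AS P' (n + 1)) ∨ (μ = .out 0 3 ∧ ∃ m, n = m + 1 ∧ AS P' m) := by
  obtain ⟨Q, hq, rfl⟩ := hp
  cases h with
  | open_ x y P P' h hxy =>
    rcases at_step hq h with ⟨hμ, _⟩ | ⟨hμ, _⟩ | hμ | ⟨z, hμ⟩ <;> simp at hμ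
  | res y μ P P' h hy =>
    rcases at_step hq h with ⟨rfl, h'⟩ | ⟨rfl, m, hm, h'⟩ | rfl | ⟨z, rfl⟩
    · exact Or.inl ⟨rfl, _, h', rfl⟩
    · exact Or.inr ⟨rfl, m, hm, _, h', rfl⟩
    · exact absurd two_mem_out23 hy
    · exact absurd two_mem_inp2 hy

lemma cs_step {P μ P'} (hp : CS P) (h : Step P μ P') : μ = .tau ∧ CS P' := by
  obtain ⟨Q, hq, rfl⟩ := hp
  cases h with
  | open_ x y P P' h hxy =>
    rcases ct_step hq h with hμ | ⟨z, hμ⟩ | ⟨hμ, _⟩ <;> simp at hμ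
  | res y μ P P' h hy =>
    rcases ct_step hq h with rfl | ⟨z, rfl⟩ | ⟨rfl, h'⟩
    · exact absurd two_mem_out23 hy
    · exact absurd two_mem_inp2 hy
    · exact ⟨rfl, _, h', rfl⟩

lemma as_tau {P n} (hp : AS P n) : ∃ P', Step P .tau P' ∧ AS P' (n + 1) := by
  obtain ⟨Q, hq, rfl⟩ := hp
  obtain ⟨Q', hs, h'⟩ := at_tau hq
  exact ⟨.res 2 Q', Step.res 2 .tau _ _ hs two_nmem_tau, _, h', rfl⟩

lemma as_out {P n m} (hp : AS P n) (hn : n = m + 1) :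
    ∃ P', Step P (.out 0 3) P' ∧ AS P' m := by
  obtain ⟨Q, hq, rfl⟩ := hp
  obtain ⟨Q', hs, h'⟩ := at_out hq hn
  exact ⟨.res 2 Q', Step.res 2 _ _ _ hs two_nmem_out03, _, h', rfl⟩

lemma cs_tau {P} (hp : CS P) : ∃ P', Step P .tau P' ∧ CS P' := by
  obtain ⟨Q, hq, rfl⟩ := hp
  obtain ⟨Q', hs, h'⟩ := ct_tau hq
  exact ⟨.res 2 Q', Step.res 2 .tau _ _ hs two_nmem_tau, _, h', rfl⟩

lemma es_step {P₁ P₂ n μ X} (hA : AS P₁ n) (hC : CS P₂)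
    (h : Step (.par P₁ P₂) μ X) :
    (μ = .tau ∧ ((∃ P₁', X = .par P₁' P₂ ∧ AS P₁' (n + 1)) ∨
                 (∃ P₂', X = .par P₁ P₂' ∧ CS P₂'))) ∨
    (μ = .out 0 3 ∧ ∃ m, n = m + 1 ∧ ∃ P₁', X = .par P₁' P₂ ∧ AS P₁' m) := by
  cases h with
  | parL μ P P' Q h hb =>
    rcases as_step hA h with ⟨rfl, h'⟩ | ⟨rfl, m, hm, h'⟩
    · exact Or.inl ⟨rfl, Or.inl ⟨P', rfl, h'⟩⟩
    · exact Or.inr ⟨rfl, m, hm, P', rfl, h'⟩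
  | parR μ P Q Q' h hb =>
    obtain ⟨rfl, h'⟩ := cs_step hC h
    exact Or.inl ⟨rfl, Or.inr ⟨Q', rfl, h'⟩⟩
  | comL x y P P' Q Q' h1 h2 =>
    rcases as_step hA h1 with ⟨hμ, _⟩ | ⟨hμ, _⟩ <;> simp at hμ
  | comR x y P P' Q Q' h1 h2 => obtain ⟨hμ, _⟩ := cs_step hC h2; simp at hμ
  | closeL x y P P' Q Q' h1 h2 hy => obtain ⟨hμ, _⟩ := cs_step hC h2; simp at hμ
  | closeR x y P P' Q Q' h1 h2 hy =>
    rcases as_step hA h1 with ⟨hμ, _⟩ | ⟨hμ, _⟩ <;> simp at hμ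

lemma fs_step {Q₁ P₂ n μ X} (hB : BT Q₁ n) (hC : CS P₂)
    (h : Step (.par Q₁ P₂) μ X) :
    (μ = .tau ∧ ((∃ Q₁', X = .par Q₁' P₂ ∧ (BT Q₁' n ∨ BT Q₁' (n + 1))) ∨
                 (∃ P₂', X = .par Q₁ P₂' ∧ CS P₂'))) ∨
    (μ = .out 0 3 ∧ ∃ m, n = m + 1 ∧ ∃ Q₁', X = .par Q₁' P₂ ∧ BT Q₁' m) := by
  cases h with
  | parL μ P P' Q h hb =>
    rcases bt_step hB h with ⟨rfl, h'⟩ | ⟨rfl, m, hm, h'⟩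
    · exact Or.inl ⟨rfl, Or.inl ⟨P', rfl, h'⟩⟩
    · exact Or.inr ⟨rfl, m, hm, P', rfl, h'⟩
  | parR μ P Q Q' h hb =>
    obtain ⟨rfl, h'⟩ := cs_step hC h
    exact Or.inl ⟨rfl, Or.inr ⟨Q', rfl, h'⟩⟩
  | comL x y P P' Q Q' h1 h2 =>
    rcases bt_step hB h1 with ⟨hμ, _⟩ | ⟨hμ, _⟩ <;> simp at hμ
  | comR x y P P' Q Q' h1 h2 => obtain ⟨hμ, _⟩ := cs_step hC h2; simp at hμ
  | closeL x y P P' Q Q' h1 h2 hy => obtain ⟨hμ, _⟩ := cs_step hC h2; simp at hμ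
  | closeR x y P P' Q Q' h1 h2 hy =>
    rcases bt_step hB h1 with ⟨hμ, _⟩ | ⟨hμ, _⟩ <;> simp at hμ

def EStat (P : Proc) (n : ℕ) : Prop := ∃ P₁ P₂, AS P₁ n ∧ CS P₂ ∧ P = .par P₁ P₂
def FStat (P : Proc) (n : ℕ) : Prop := ∃ Q₁ P₂, BT Q₁ n ∧ CS P₂ ∧ P = .par Q₁ P₂
def BR (P Q : Proc) : Prop := ∃ n, EStat P n ∧ FStat Q n

theorem isBisim_BR : IsBisim BR := by
  rintro P Q ⟨n, ⟨P₁, P₂, hA, hC, rfl⟩, ⟨Q₁, Q₂, hB, hC2, rfl⟩⟩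
  constructor
  · intro μ P' h
    rcases es_step hA hC h with ⟨rfl, hcase⟩ | ⟨rfl, m, rfl, P₁', rfl, hA'⟩
    · rcases hcase with ⟨P₁', rfl, hA'⟩ | ⟨P₂', rfl, hC'⟩
      · obtain ⟨Q₁', hs, hB'⟩ := bt_tau1 hB
        exact ⟨.par Q₁' Q₂, Step.parL _ _ _ _ hs (bnP bn_tau),
          n + 1, ⟨_, _, hA', hC, rfl⟩, ⟨_, _, hB', hC2, rfl⟩⟩
      · obtain ⟨Q₂', hs, hC2'⟩ := cs_tau hC2
        exact ⟨.par Q₁ Q₂', Step.parR _ _ _ _ hs (bnP bn_tau),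
          n, ⟨_, _, hA, hC', rfl⟩, ⟨_, _, hB, hC2', rfl⟩⟩
    · obtain ⟨Q₁', hs, hB'⟩ := bt_out hB rfl
      exact ⟨.par Q₁' Q₂, Step.parL _ _ _ _ hs (bnP bn_out),
        m, ⟨_, _, hA', hC, rfl⟩, ⟨_, _, hB', hC2, rfl⟩⟩
  · intro μ Q' h
    rcases fs_step hB hC2 h with ⟨rfl, hcase⟩ | ⟨rfl, m, rfl, Q₁', rfl, hB'⟩
    · rcases hcase with ⟨Q₁', rfl, hB'⟩ | ⟨Q₂', rfl, hC2'⟩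
      · rcases hB' with hB' | hB'
        · obtain ⟨P₂', hs, hC'⟩ := cs_tau hC
          exact ⟨.par P₁ P₂', Step.parR _ _ _ _ hs (bnP bn_tau),
            n, ⟨_, _, hA, hC', rfl⟩, ⟨_, _, hB', hC2, rfl⟩⟩
        · obtain ⟨P₁', hs, hA'⟩ := as_tau hA
          exact ⟨.par P₁' P₂, Step.parL _ _ _ _ hs (bnP bn_tau),
            n + 1, ⟨_, _, hA', hC, rfl⟩, ⟨_, _, hB', hC2, rfl⟩⟩
      · obtain ⟨P₂', hs, hC'⟩ := cs_tau hC
        exact ⟨.par P₁ P₂', Step.parR _ _ _ _ hs (bnP bn_tau),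
          n, ⟨_, _, hA, hC', rfl⟩, ⟨_, _, hB, hC2', rfl⟩⟩
    · obtain ⟨P₁', hs, hA'⟩ := as_out hA rfl
      exact ⟨.par P₁' P₂, Step.parL _ _ _ _ hs (bnP bn_out),
        m, ⟨_, _, hA', hC, rfl⟩, ⟨_, _, hB', hC2, rfl⟩⟩

theorem bisim_EF :
    Bisimilar
      (Proc.par
        (.res 2 (.par (.output 2 3 .nil)
          (.rep (.input 2 3 (.par (.output 2 3 .nil) (.output 0 3 .nil))))))
        (.res 2 (.par (.output 2 3 .nil) (.rep (.input 2 3 (.output 2 3 .nil))))))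
      (Proc.par
        (.rep (.res 1 (.par (.output 1 3 .nil)
          (.par (.input 1 3 .nil) (.input 1 3 (.output 0 3 .nil))))))
        (.res 2 (.par (.output 2 3 .nil) (.rep (.input 2 3 (.output 2 3 .nil)))))) := by
  refine ⟨BR, isBisim_BR, 0, ⟨_, _, ⟨_, AT.mk CtT.ct, rfl⟩, ⟨_, CT.base, rfl⟩, rfl⟩,
    ⟨_, _, BT.base, ⟨_, CT.base, rfl⟩, rfl⟩⟩

end PiFair

namespace PiFair

/-! ### Labeled terms -/

abbrev vA : Label := ([false, false], 0)
abbrev vAr : Label := ([false, true], 0)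
abbrev vC1 : Label := ([true, false], 0)
abbrev vC2 : Label := ([true, true, false], 0)
abbrev v3 : Label := ([true, true, true], 0)

abbrev AL0 : LProc := .res 2 (.par (.output 2 3 vA .nil) (.rep vAr bodyA))
abbrev CL0 : LProc := .res 2 (.par (.output 2 3 vC1 .nil) (.rep vC2 bodyC))
abbrev EL : LProc := .par AL0 CL0
abbrev FL : LProc := .par (.rep ([false], 0) bodyB) CL0
abbrev rhoL : LProc := .input 0 3 v3 (.omegaPre .nil)

lemma bnPL {μ : Act} (hμ : μ.bn = (∅ : Set Name)) {P : LProc} :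
    ∀ z ∈ μ.bn, z ∉ P.fn := by
  intro z hz; rw [hμ] at hz; exact absurd hz (Set.notMem_empty z)

/-! ### Labeled invariants -/

inductive LGb : LProc → ℕ → Prop
  | nil : LGb .nil 0
  | aO (l) : LGb (.output 0 3 l .nil) 1
  | par {g h m n k} : LGb g m → LGb h n → k = m + n → LGb (.par g h) k

inductive LCtT : LProc → ℕ → Prop
  | ct (l) : LCtT (.output 2 3 l .nil) 0
  | parL {g h m n k} : LCtT g m → LGb h n → k = m + n → LCtT (.par g h) k
  | parR {g h m n k} : LGb g m → LCtT h n → k = m + n → LCtT (.par g h) k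

inductive LAT : LProc → ℕ → Prop
  | mk {g n} (l) : LCtT g n → LAT (.par g (.rep l bodyA)) n
  | pad {g Q m n k} : LGb g m → LAT Q n → k = m + n → LAT (.par g Q) k

inductive LCT : LProc → Prop
  | base (l l') : LCT (.par (.output 2 3 l .nil) (.rep l' bodyC))
  | pad {Q} : LCT Q → LCT (.par .nil Q)

lemma lgb_step {g n μ g'} (hg : LGb g n) (h : LStep g μ g') :
    μ = .out 0 3 ∧ ∃ m, n = m + 1 ∧ LGb g' m := by
  induction hg generalizing μ g' with
  | nil => cases h
  | aO l => cases h; exact ⟨rfl, 0, rfl, LGb.nil⟩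
  | @par g h a b k hg hh e ihg ihh =>
    cases h with
    | parL μ P P' Q h hb =>
      obtain ⟨hμ, m, hm, h'⟩ := ihg h
      exact ⟨hμ, m + b, by omega, LGb.par h' hh rfl⟩
    | parR μ P Q Q' h hb =>
      obtain ⟨hμ, m, hm, h'⟩ := ihh h
      exact ⟨hμ, a + m, by omega, LGb.par hg h' rfl⟩
    | comL x y P P' Q Q' h1 h2 => obtain ⟨hμ, _⟩ := ihg h1; simp at hμ
    | comR x y P P' Q Q' h1 h2 => obtain ⟨hμ, _⟩ := ihh h2; simp at hμ
    | closeL x y P P' Q Q' h1 h2 hy => obtain ⟨hμ, _⟩ := ihg h1; simp at hμ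
    | closeR x y P P' Q Q' h1 h2 hy => obtain ⟨hμ, _⟩ := ihg h1; simp at hμ

lemma lctT_step {g n μ g'} (hg : LCtT g n) (h : LStep g μ g') :
    (μ = .out 2 3 ∧ LGb g' n) ∨ (μ = .out 0 3 ∧ ∃ m, n = m + 1 ∧ LCtT g' m) := by
  induction hg generalizing μ g' with
  | ct l => cases h; exact Or.inl ⟨rfl, LGb.nil⟩
  | @parL g h a b k hg hh e ihg =>
    cases h with
    | parL μ P P' Q h hb =>
      rcases ihg h with ⟨hμ, h'⟩ | ⟨hμ, m, hm, h'⟩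
      · exact Or.inl ⟨hμ, LGb.par h' hh (by omega)⟩
      · exact Or.inr ⟨hμ, m + b, by omega, LCtT.parL h' hh rfl⟩
    | parR μ P Q Q' h hb =>
      obtain ⟨hμ, m, hm, h'⟩ := lgb_step hh h
      exact Or.inr ⟨hμ, a + m, by omega, LCtT.parL hg h' rfl⟩
    | comL x y P P' Q Q' h1 h2 =>
      rcases ihg h1 with ⟨hμ, _⟩ | ⟨hμ, _⟩ <;> simp at hμ
    | comR x y P P' Q Q' h1 h2 => obtain ⟨hμ, _⟩ := lgb_step hh h2; simp at hμ
    | closeL x y P P' Q Q' h1 h2 hy =>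
      rcases ihg h1 with ⟨hμ, _⟩ | ⟨hμ, _⟩ <;> simp at hμ
    | closeR x y P P' Q Q' h1 h2 hy =>
      rcases ihg h1 with ⟨hμ, _⟩ | ⟨hμ, _⟩ <;> simp at hμ
  | @parR g h a b k hg hh e ihh =>
    cases h with
    | parL μ P P' Q h hb =>
      obtain ⟨hμ, m, hm, h'⟩ := lgb_step hg h
      exact Or.inr ⟨hμ, m + b, by omega, LCtT.parR h' hh rfl⟩
    | parR μ P Q Q' h hb =>
      rcases ihh h with ⟨hμ, h'⟩ | ⟨hμ, m, hm, h'⟩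
      · exact Or.inl ⟨hμ, LGb.par hg h' (by omega)⟩
      · exact Or.inr ⟨hμ, a + m, by omega, LCtT.parR hg h' rfl⟩
    | comL x y P P' Q Q' h1 h2 => obtain ⟨hμ, _⟩ := lgb_step hg h1; simp at hμ
    | comR x y P P' Q Q' h1 h2 =>
      rcases ihh h2 with ⟨hμ, _⟩ | ⟨hμ, _⟩ <;> simp at hμ
    | closeL x y P P' Q Q' h1 h2 hy => obtain ⟨hμ, _⟩ := lgb_step hg h1; simp at hμ
    | closeR x y P P' Q Q' h1 h2 hy => obtain ⟨hμ, _⟩ := lgb_step hg h1; simp at hμ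

lemma lat_step {Q n μ Q'} (hq : LAT Q n) (h : LStep Q μ Q') :
    (μ = .tau ∧ LAT Q' (n + 1)) ∨ (μ = .out 0 3 ∧ ∃ m, n = m + 1 ∧ LAT Q' m) ∨
      (μ = .out 2 3) ∨ (∃ z, μ = .inp 2 z) := by
  induction hq generalizing μ Q' with
  | @mk g n l hg =>
    cases h with
    | parL μ P P' Q h hb =>
      rcases lctT_step hg h with ⟨hμ, h'⟩ | ⟨hμ, m, hm, h'⟩
      · exact Or.inr (Or.inr (Or.inl hμ))
      · exact Or.inr (Or.inl ⟨hμ, m, hm, LAT.mk l h'⟩)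
    | parR μ P Q Q' h hb =>
      cases h with
      | rep μ l' P P' h =>
        obtain ⟨z, hμ, _⟩ := stepA_body h
        exact Or.inr (Or.inr (Or.inr ⟨z, hμ⟩))
    | comL x y P P' Q Q' h1 h2 =>
      rcases lctT_step hg h1 with ⟨hμ, _⟩ | ⟨hμ, _⟩ <;> simp at hμ
    | comR x y P P' Q Q' h1 h2 =>
      rcases lctT_step hg h1 with ⟨hμ, h'⟩ | ⟨hμ, m, hm, h'⟩
      · obtain ⟨rfl, rfl⟩ : x = 2 ∧ y = 3 := by simpa using hμ
        cases h2 with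
        | rep μ l' P P' h =>
          obtain ⟨z, hμ', hP⟩ := stepA_body h
          obtain rfl : (3 : Name) = z := by simpa using hμ'
          subst hP
          have hin : ∀ w w' : Label, LAT (.par (labelWith w
              (.par (.output 2 3 .nil) (.output 0 3 .nil))) (.rep w' bodyA)) 1 := by
            intro w w'
            have hct : LCtT (labelWith w
                (.par (.output 2 3 .nil) (.output 0 3 .nil))) 1 := by
              simp only [labelWith]
              exact LCtT.parL (LCtT.ct _) (LGb.aO _) (by omega)
            exact LAT.mk _ hct
          exact Or.inl ⟨rfl, LAT.pad h' (hin _ _) (by omega)⟩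
      · obtain ⟨rfl, rfl⟩ : x = 0 ∧ y = 3 := by simpa using hμ
        cases h2 with
        | rep μ l' P P' h => obtain ⟨z, hμ', _⟩ := stepA_body h; simp at hμ'
    | closeL x y P P' Q Q' h1 h2 hy =>
      cases h2 with
      | rep μ l' P P' h => obtain ⟨z, hμ', _⟩ := stepA_body h; simp at hμ'
    | closeR x y P P' Q Q' h1 h2 hy =>
      rcases lctT_step hg h1 with ⟨hμ, _⟩ | ⟨hμ, _⟩ <;> simp at hμ
  | @pad g R a b k hg hr e ihr =>
    cases h with
    | parL μ P P' Q h hb =>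
      obtain ⟨hμ, m, hm, h'⟩ := lgb_step hg h
      exact Or.inr (Or.inl ⟨hμ, m + b, by omega, LAT.pad h' hr rfl⟩)
    | parR μ P Q Q' h hb =>
      rcases ihr h with ⟨hμ, h'⟩ | ⟨hμ, m, hm, h'⟩ | hμ | hμ
      · exact Or.inl ⟨hμ, LAT.pad hg h' (by omega)⟩
      · exact Or.inr (Or.inl ⟨hμ, a + m, by omega, LAT.pad hg h' rfl⟩)
      · exact Or.inr (Or.inr (Or.inl hμ))
      · exact Or.inr (Or.inr (Or.inr hμ))
    | comL x y P P' Q Q' h1 h2 => obtain ⟨hμ, _⟩ := lgb_step hg h1; simp at hμ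
    | comR x y P P' Q Q' h1 h2 =>
      obtain ⟨hμ, _⟩ := lgb_step hg h1
      obtain ⟨rfl, rfl⟩ : x = 0 ∧ y = 3 := by simpa using hμ
      rcases ihr h2 with ⟨hμ', _⟩ | ⟨hμ', _⟩ | hμ' | ⟨z, hμ'⟩ <;> simp at hμ'
    | closeL x y P P' Q Q' h1 h2 hy => obtain ⟨hμ, _⟩ := lgb_step hg h1; simp at hμ
    | closeR x y P P' Q Q' h1 h2 hy => obtain ⟨hμ, _⟩ := lgb_step hg h1; simp at hμ

lemma lct_step {Q μ Q'} (hq : LCT Q) (h : LStep Q μ Q') :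
    (μ = .out 2 3) ∨ (∃ z, μ = .inp 2 z) ∨ (μ = .tau ∧ LCT Q') := by
  induction hq generalizing μ Q' with
  | base l l' =>
    cases h with
    | parL μ P P' Q h hb => cases h; exact Or.inl rfl
    | parR μ P Q Q' h hb =>
      cases h with
      | rep μ l'' P P' h =>
        obtain ⟨z, hμ, _⟩ := stepC_body h; exact Or.inr (Or.inl ⟨z, hμ⟩)
    | comL x y P P' Q Q' h1 h2 => cases h1
    | comR x y P P' Q Q' h1 h2 =>
      cases h1
      cases h2 with
      | rep μ l'' P P' h =>
        obtain ⟨z, hμ', hP⟩ := stepC_body h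
        obtain rfl : (3 : Name) = z := by simpa using hμ'
        subst hP
        refine Or.inr (Or.inr ⟨rfl, ?_⟩)
        refine LCT.pad ?_
        simp only [labelWith]
        exact LCT.base _ _
    | closeL x y P P' Q Q' h1 h2 hy =>
      cases h2 with
      | rep μ l'' P P' h => obtain ⟨z, hμ', _⟩ := stepC_body h; simp at hμ'
    | closeR x y P P' Q Q' h1 h2 hy => cases h1
  | @pad R hr ihr =>
    cases h with
    | parL μ P P' Q h hb => cases h
    | parR μ P Q Q' h hb =>
      rcases ihr h with hμ | hμ | ⟨hμ, h'⟩
      · exact Or.inl hμ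
      · exact Or.inr (Or.inl hμ)
      · exact Or.inr (Or.inr ⟨hμ, LCT.pad h'⟩)
    | comL x y P P' Q Q' h1 h2 => cases h1
    | comR x y P P' Q Q' h1 h2 => cases h1
    | closeL x y P P' Q Q' h1 h2 hy => cases h1
    | closeR x y P P' Q Q' h1 h2 hy => cases h1

end PiFair

namespace PiFair

lemma bn_omega : (Act.omega).bn = (∅ : Set Name) := rfl

def LAS (P : LProc) (n : ℕ) : Prop := ∃ Q, LAT Q n ∧ P = .res 2 Q
def LCS (P : LProc) : Prop := ∃ Q, LCT Q ∧ P = .res 2 Q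

lemma las_step {P n μ P'} (hp : LAS P n) (h : LStep P μ P') :
    (μ = .tau ∧ LAS P' (n + 1)) ∨ (μ = .out 0 3 ∧ ∃ m, n = m + 1 ∧ LAS P' m) := by
  obtain ⟨Q, hq, rfl⟩ := hp
  cases h with
  | open_ x y P P' h hxy =>
    rcases lat_step hq h with ⟨hμ, _⟩ | ⟨hμ, _⟩ | hμ | ⟨z, hμ⟩ <;> simp at hμ
  | res y μ P P' h hy =>
    rcases lat_step hq h with ⟨rfl, h'⟩ | ⟨rfl, m, hm, h'⟩ | rfl | ⟨z, rfl⟩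
    · exact Or.inl ⟨rfl, _, h', rfl⟩
    · exact Or.inr ⟨rfl, m, hm, _, h', rfl⟩
    · exact absurd two_mem_out23 hy
    · exact absurd two_mem_inp2 hy

lemma lcs_step {P μ P'} (hp : LCS P) (h : LStep P μ P') : μ = .tau ∧ LCS P' := by
  obtain ⟨Q, hq, rfl⟩ := hp
  cases h with
  | open_ x y P P' h hxy =>
    rcases lct_step hq h with hμ | ⟨z, hμ⟩ | ⟨hμ, _⟩ <;> simp at hμ
  | res y μ P P' h hy =>
    rcases lct_step hq h with rfl | ⟨z, rfl⟩ | ⟨rfl, h'⟩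
    · exact absurd two_mem_out23 hy
    · exact absurd two_mem_inp2 hy
    · exact ⟨rfl, _, h', rfl⟩

lemma lec_step {AL CL n μ X} (hA : LAS AL n) (hC : LCS CL)
    (h : LStep (.par AL CL) μ X) :
    (μ = .tau ∧ ((∃ AL', X = .par AL' CL ∧ LAS AL' (n + 1)) ∨
                 (∃ CL', X = .par AL CL' ∧ LCS CL'))) ∨
    (μ = .out 0 3 ∧ ∃ m, n = m + 1 ∧ ∃ AL', X = .par AL' CL ∧ LAS AL' m) := by
  cases h with
  | parL μ P P' Q h hb =>
    rcases las_step hA h with ⟨rfl, h'⟩ | ⟨rfl, m, hm, h'⟩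
    · exact Or.inl ⟨rfl, Or.inl ⟨P', rfl, h'⟩⟩
    · exact Or.inr ⟨rfl, m, hm, P', rfl, h'⟩
  | parR μ P Q Q' h hb =>
    obtain ⟨rfl, h'⟩ := lcs_step hC h
    exact Or.inl ⟨rfl, Or.inr ⟨Q', rfl, h'⟩⟩
  | comL x y P P' Q Q' h1 h2 =>
    rcases las_step hA h1 with ⟨hμ, _⟩ | ⟨hμ, _⟩ <;> simp at hμ
  | comR x y P P' Q Q' h1 h2 => obtain ⟨hμ, _⟩ := lcs_step hC h2; simp at hμ
  | closeL x y P P' Q Q' h1 h2 hy => obtain ⟨hμ, _⟩ := lcs_step hC h2; simp at hμ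
  | closeR x y P P' Q Q' h1 h2 hy =>
    rcases las_step hA h1 with ⟨hμ, _⟩ | ⟨hμ, _⟩ <;> simp at hμ

lemma top_step {AL CL n X} (hA : LAS AL n) (hC : LCS CL)
    (h : LStep (.par (.par AL CL) rhoL) .tau X) :
    (∃ AL', X = .par (.par AL' CL) rhoL ∧ LAS AL' (n + 1)) ∨
    (∃ CL', X = .par (.par AL CL') rhoL ∧ LCS CL') ∨
    (∃ Y, X = .par Y (.omegaPre .nil)) := by
  cases h with
  | parL μ P P' Q h hb =>
    rcases lec_step hA hC h with ⟨_, hcase⟩ | ⟨hμ, _⟩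
    · rcases hcase with ⟨AL', rfl, h'⟩ | ⟨CL', rfl, h'⟩
      · exact Or.inl ⟨AL', rfl, h'⟩
      · exact Or.inr (Or.inl ⟨CL', rfl, h'⟩)
    · simp at hμ
  | parR μ P Q Q' h hb => cases h
  | comL x y P P' Q Q' h1 h2 => cases h2
  | comR x y P P' Q Q' h1 h2 =>
    cases h2
    exact Or.inr (Or.inr ⟨P', by simp [LProc.subst, Proc.subst]⟩)
  | closeL x y P P' Q Q' h1 h2 hy => cases h2
  | closeR x y P P' Q Q' h1 h2 hy =>
    rcases lec_step hA hC h1 with ⟨hμ, _⟩ | ⟨hμ, _⟩ <;> simp at hμ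

/-! ### Liveness -/

lemma lgb_live {g n} (hg : LGb g n) (hn : 1 ≤ n) : ∃ w, Live w (.out 0 3) g := by
  induction hg with
  | nil => omega
  | aO l => exact ⟨l, Live.output l 0 3 .nil⟩
  | @par g h a b k hg hh e ihg ihh =>
    rcases Nat.eq_zero_or_pos a with ha | ha
    · obtain ⟨w, hw⟩ := ihh (by omega)
      exact ⟨w, Live.parR _ _ _ _ hw (bnPL bn_out)⟩
    · obtain ⟨w, hw⟩ := ihg ha
      exact ⟨w, Live.parL _ _ _ _ hw (bnPL bn_out)⟩

lemma lctT_live {g n} (hg : LCtT g n) (hn : 1 ≤ n) : ∃ w, Live w (.out 0 3) g := by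
  induction hg with
  | ct l => omega
  | @parL g h a b k hg hh e ih =>
    rcases Nat.eq_zero_or_pos a with ha | ha
    · obtain ⟨w, hw⟩ := lgb_live hh (by omega)
      exact ⟨w, Live.parR _ _ _ _ hw (bnPL bn_out)⟩
    · obtain ⟨w, hw⟩ := ih ha
      exact ⟨w, Live.parL _ _ _ _ hw (bnPL bn_out)⟩
  | @parR g h a b k hg hh e ih =>
    rcases Nat.eq_zero_or_pos b with hb | hb
    · obtain ⟨w, hw⟩ := lgb_live hg (by omega)
      exact ⟨w, Live.parL _ _ _ _ hw (bnPL bn_out)⟩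
    · obtain ⟨w, hw⟩ := ih hb
      exact ⟨w, Live.parR _ _ _ _ hw (bnPL bn_out)⟩

lemma lat_live {Q n} (hq : LAT Q n) (hn : 1 ≤ n) : ∃ w, Live w (.out 0 3) Q := by
  induction hq with
  | @mk g n l hg =>
    obtain ⟨w, hw⟩ := lctT_live hg hn
    exact ⟨w, Live.parL _ _ _ _ hw (bnPL bn_out)⟩
  | @pad g R a b k hg hr e ih =>
    rcases Nat.eq_zero_or_pos a with ha | ha
    · obtain ⟨w, hw⟩ := ih (by omega)
      exact ⟨w, Live.parR _ _ _ _ hw (bnPL bn_out)⟩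
    · obtain ⟨w, hw⟩ := lgb_live hg ha
      exact ⟨w, Live.parL _ _ _ _ hw (bnPL bn_out)⟩

lemma las_live {P n} (hp : LAS P n) (hn : 1 ≤ n) : ∃ w, Live w (.out 0 3) P := by
  obtain ⟨Q, hq, rfl⟩ := hp
  obtain ⟨w, hw⟩ := lat_live hq hn
  exact ⟨w, Live.res w _ 2 _ hw two_nmem_out03⟩

lemma live_v3 {AL CL n} (hA : LAS AL n) (hn : 1 ≤ n) :
    Live v3 .tau (.par (.par AL CL) rhoL) := by
  obtain ⟨w, hw⟩ := las_live hA hn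
  exact Live.comR₂ w v3 0 3 _ _ (Live.parL _ _ _ _ hw (bnPL bn_out))
    (Live.input v3 0 3 3 _)

lemma liveA0 : Live vA .tau AL0 := by
  have hrep : Live vAr (.inp 2 3) (.rep vAr bodyA) :=
    Live.rep vAr (.inp 2 3) bodyA _ (Step.input 2 3 3 _)
  exact Live.res vA .tau 2 _
    (Live.comR₁ vA vAr 2 3 _ _ (Live.output vA 2 3 .nil) hrep) two_nmem_tau

/-! ### WfMust for E -/

theorem wf_EL : WfMust EL rhoL := by
  intro c hwf
  by_contra hns
  have hnoω : ∀ i T, ¬ LStep (c.seq i) .omega T := fun i T h => hns ⟨i, T, h⟩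
  have hA0 : LAS AL0 0 := ⟨_, LAT.mk _ (LCtT.ct _), rfl⟩
  by_cases H : ∃ i AL CL n, c.seq i = .par (.par AL CL) rhoL ∧
      LAS AL n ∧ LCS CL ∧ 1 ≤ n
  · obtain ⟨i₀, AL, CL, n, hseq, hA, hC, hn⟩ := H
    have key : ∀ k, ∃ AL CL n, c.seq (i₀ + k) = .par (.par AL CL) rhoL ∧
        LAS AL n ∧ LCS CL ∧ 1 ≤ n := by
      intro k
      induction k with
      | zero => exact ⟨AL, CL, n, hseq, hA, hC, hn⟩
      | succ k ih =>
        obtain ⟨AL', CL', n', hseq', hA', hC', hn'⟩ := ih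
        rcases c.succ (i₀ + k) with hst | ⟨_, heq⟩
        · rw [hseq'] at hst
          rcases top_step hA' hC' hst with ⟨AL'', h1, h2⟩ | ⟨CL'', h1, h2⟩ | ⟨Y, h1⟩
          · exact ⟨AL'', CL', n' + 1, h1, h2, hC', by omega⟩
          · exact ⟨AL', CL'', n', h1, hA', h2, hn'⟩
          · exact absurd (h1 ▸ LStep.parR .omega _ _ _ (LStep.omega_ _) (bnPL bn_omega))
              (hnoω (i₀ + k + 1) _)
        · exact ⟨AL', CL', n', heq ▸ hseq', hA', hC', hn'⟩
    obtain ⟨j, hj, hnl⟩ := hwf v3 i₀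
    obtain ⟨AL', CL', n', hseq', hA', hC', hn'⟩ := key (j - i₀)
    rw [show i₀ + (j - i₀) = j from by omega] at hseq'
    refine hnl ?_
    show Live v3 .tau (c.seq j)
    rw [hseq']
    exact live_v3 hA' hn'
  · push_neg at H
    have key : ∀ i, ∃ CL, c.seq i = .par (.par AL0 CL) rhoL ∧ LCS CL := by
      intro i
      induction i with
      | zero => exact ⟨CL0, by rw [c.init], ⟨_, LCT.base _ _, rfl⟩⟩
      | succ i ih =>
        obtain ⟨CL, hseq, hC⟩ := ih
        rcases c.succ i with hst | ⟨_, heq⟩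
        · rw [hseq] at hst
          rcases top_step hA0 hC hst with ⟨AL', h1, h2⟩ | ⟨CL', h1, h2⟩ | ⟨Y, h1⟩
          · have := H (i + 1) AL' CL 1 h1 h2 hC
            omega
          · exact ⟨CL', h1, h2⟩
          · exact absurd (h1 ▸ LStep.parR .omega _ _ _ (LStep.omega_ _) (bnPL bn_omega))
              (hnoω (i + 1) _)
        · exact ⟨CL, heq ▸ hseq, hC⟩
    obtain ⟨j, hj, hnl⟩ := hwf vA 0
    obtain ⟨CL, hseq, hC⟩ := key j
    refine hnl ?_
    show Live vA .tau (c.seq j)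
    rw [hseq]
    exact Live.parL _ _ _ _ (Live.parL _ _ _ _ liveA0 (bnPL bn_tau)) (bnPL bn_tau)

theorem sf_imp_wf {S} {c : MaxComp LTauStep S} (h : StrongFair c) : WeakFair c := by
  intro v i
  obtain ⟨i₀, h₀⟩ := h v
  exact ⟨max i i₀, le_max_left _ _, h₀ _ (le_max_right _ _)⟩

theorem sf_EL : SfMust EL rhoL := fun c hsf => wf_EL c (sf_imp_wf hsf)

end PiFair

namespace PiFair

/-! ### The unfair-avoiding computation for F -/

def repLab (k : ℕ) : Label := ([false] ++ List.replicate k true, k)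
def nxt (l : Label) : Label := (l.1 ++ [true], l.2 + 1)
def deadB (l : Label) : LProc := labelWith (l.1 ++ [false], l.2 + 1) dB0
def ctOf (l : Label) : LProc := .output 2 3 (l.1 ++ [false], l.2 + 1) .nil

def buildB : ℕ → ℕ → LProc
  | i, 0 => .rep (repLab i) bodyB
  | i, k + 1 => .par (deadB (repLab i)) (buildB (i + 1) k)

def buildC : LProc → Label → ℕ → LProc
  | ct, l, 0 => .par ct (.rep l bodyC)
  | ct, l, m + 1 => .par .nil (buildC (ctOf l) (nxt l) m)

lemma repLab_succ (i : ℕ) : repLab (i + 1) = nxt (repLab i) := by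
  simp [repLab, nxt, List.replicate_succ']

lemma stepB_build (i k : ℕ) : LStep (buildB i k) .tau (buildB i (k + 1)) := by
  induction k generalizing i with
  | zero =>
    show LStep (.rep (repLab i) bodyB) .tau
      (.par (deadB (repLab i)) (.rep (repLab (i + 1)) bodyB))
    rw [repLab_succ]
    exact LStep.rep .tau (repLab i) bodyB dB0 step_bodyB_tau0
  | succ k ih =>
    exact LStep.parR _ _ _ _ (ih (i + 1)) (bnPL bn_tau)

lemma stepC_build (w l : Label) (m : ℕ) :
    LStep (buildC (.output 2 3 w .nil) l m) .tau
      (buildC (.output 2 3 w .nil) l (m + 1)) := by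
  induction m generalizing w l with
  | zero =>
    have hrep : LStep (.rep l bodyC) (.inp 2 3)
        (.par (labelWith (l.1 ++ [false], l.2 + 1) (Proc.output 2 3 .nil))
          (.rep (l.1 ++ [true], l.2 + 1) bodyC)) := by
      have h0 : Step bodyC (.inp 2 3) (ctP.subst 3 3) := Step.input 2 3 3 _
      have h1 := LStep.rep (.inp 2 3) l bodyC (ctP.subst 3 3) h0
      simpa [Proc.subst] using h1
    have h := LStep.comR 2 3 _ _ _ _ (LStep.output 2 3 w .nil) hrep
    simpa [buildC, ctOf, nxt, labelWith] using h
  | succ m ih =>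
    exact LStep.parR _ _ _ _ (ih _ _) (bnPL bn_tau)

def bc (i : ℕ) : ℕ := (i + 1) / 2
def cc (i : ℕ) : ℕ := i / 2

def Sseq (i : ℕ) : LProc :=
  .par (.par (buildB 0 (bc i)) (.res 2 (buildC (.output 2 3 vC1 .nil) vC2 (cc i)))) rhoL

lemma sstep (i : ℕ) : LStep (Sseq i) .tau (Sseq (i + 1)) := by
  rcases Nat.even_or_odd i with ⟨a, rfl⟩ | ⟨a, rfl⟩
  · have e1 : bc (a + a) = a := by unfold bc; omega
    have e2 : bc (a + a + 1) = a + 1 := by unfold bc; omega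
    have e3 : cc (a + a) = a := by unfold cc; omega
    have e4 : cc (a + a + 1) = a := by unfold cc; omega
    unfold Sseq
    rw [e1, e2, e3, e4]
    exact LStep.parL _ _ _ _ (LStep.parL _ _ _ _ (stepB_build 0 a) (bnPL bn_tau))
      (bnPL bn_tau)
  · have e1 : bc (2 * a + 1) = a + 1 := by unfold bc; omega
    have e2 : bc (2 * a + 1 + 1) = a + 1 := by unfold bc; omega
    have e3 : cc (2 * a + 1) = a := by unfold cc; omega
    have e4 : cc (2 * a + 1 + 1) = a + 1 := by unfold cc; omega
    unfold Sseq
    rw [e1, e2, e3, e4]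
    refine LStep.parL _ _ _ _ (LStep.parR _ _ _ _ ?_ (bnPL bn_tau)) (bnPL bn_tau)
    exact LStep.res 2 .tau _ _ (stepC_build vC1 vC2 a) two_nmem_tau

/-! ### No success along the computation -/

def NoTopO : LProc → Prop
  | .nil => True
  | .input _ _ _ _ => True
  | .output _ _ _ _ => True
  | .omegaPre _ => False
  | .par a b => NoTopO a ∧ NoTopO b
  | .res _ a => NoTopO a
  | .rep _ P => P.noOmega

lemma step_omega {P μ P'} (h : Step P μ P') : μ = .omega → P.noOmega → False := by
  induction h with
  | input x y z P => intro hμ _; simp at hμ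
  | output x y P => intro hμ _; simp at hμ
  | open_ x y P P' h hxy ih => intro hμ _; simp at hμ
  | res y μ P P' h hy ih => intro hμ hn; exact ih hμ hn
  | parL μ P P' Q h hb ih => intro hμ hn; exact ih hμ hn.1
  | parR μ P Q Q' h hb ih => intro hμ hn; exact ih hμ hn.2
  | comL x y P P' Q Q' h1 h2 ih1 ih2 => intro hμ _; simp at hμ
  | comR x y P P' Q Q' h1 h2 ih1 ih2 => intro hμ _; simp at hμ
  | closeL x y P P' Q Q' h1 h2 hy ih1 ih2 => intro hμ _; simp at hμ
  | closeR x y P P' Q Q' h1 h2 hy ih1 ih2 => intro hμ _; simp at hμ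
  | rep μ P P' h ih => intro hμ hn; exact ih hμ hn
  | omega_ P => intro _ hn; exact hn

lemma lstep_omega {X μ T} (h : LStep X μ T) : μ = .omega → NoTopO X → False := by
  induction h with
  | input x y z l E => intro hμ _; simp at hμ
  | output x y l E => intro hμ _; simp at hμ
  | open_ x y E E' h hxy ih => intro hμ _; simp at hμ
  | res y μ E E' h hy ih => intro hμ hn; exact ih hμ hn
  | parL μ E E' F h hb ih => intro hμ hn; exact ih hμ hn.1
  | parR μ E F F' h hb ih => intro hμ hn; exact ih hμ hn.2
  | comL x y E E' F F' h1 h2 ih1 ih2 => intro hμ _; simp at hμ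
  | comR x y E E' F F' h1 h2 ih1 ih2 => intro hμ _; simp at hμ
  | closeL x y E E' F F' h1 h2 hy ih1 ih2 => intro hμ _; simp at hμ
  | closeR x y E E' F F' h1 h2 hy ih1 ih2 => intro hμ _; simp at hμ
  | rep μ l P P' h => intro hμ hn; exact step_omega h hμ hn
  | omega_ o => intro _ hn; exact hn

lemma noTopO_labelWith {P : Proc} (hn : P.noOmega) : ∀ l, NoTopO (labelWith l P) := by
  induction P with
  | nil => intro l; trivial
  | input x y P ih => intro l; trivial
  | output x y P ih => intro l; trivial
  | omegaPre P ih => exact absurd hn (by simp [Proc.noOmega])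
  | par P Q ih1 ih2 => intro l; exact ⟨ih1 hn.1 _, ih2 hn.2 _⟩
  | res x P ih => intro l; exact ih hn _
  | rep P ih => intro l; exact hn

lemma noOmega_dB0 : Proc.noOmega dB0 := ⟨trivial, trivial, trivial⟩

lemma noTopO_buildB (i k : ℕ) : NoTopO (buildB i k) := by
  induction k generalizing i with
  | zero => exact ⟨trivial, trivial, trivial⟩
  | succ k ih => exact ⟨noTopO_labelWith noOmega_dB0 _, ih (i + 1)⟩

lemma noTopO_buildC (ct : LProc) (hct : NoTopO ct) (l : Label) (m : ℕ) :
    NoTopO (buildC ct l m) := by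
  induction m generalizing ct l with
  | zero => exact ⟨hct, trivial⟩
  | succ m ih => exact ⟨trivial, ih (ctOf l) True.intro (nxt l)⟩

lemma noTopO_S (i : ℕ) : NoTopO (Sseq i) :=
  ⟨⟨noTopO_buildB _ _, noTopO_buildC (.output 2 3 vC1 .nil) True.intro vC2 (cc i)⟩, trivial⟩

end PiFair

namespace PiFair

lemma no_live_shape {v μ} (w w' : Label) :
    ¬ Live v μ (.res 1 (.par .nil (.par .nil
      (.input 1 3 w (.output 0 3 w' .nil))))) := by
  intro h
  cases h with
  | res l μ y E h hy =>
    cases h with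
    | parL l μ E F h hb => cases h
    | parR l μ E F h hb =>
      cases h with
      | parL l μ E F h hb => cases h
      | parR l μ E F h hb => cases h; exact absurd one_mem_inp1 hy
      | comL₁ l l' x y E F h1 h2 => cases h1
      | comL₂ l l' x y E F h1 h2 => cases h1
      | comR₁ l l' x y E F h1 h2 => cases h1
      | comR₂ l l' x y E F h1 h2 => cases h1
      | closeL₁ l l' x y E F h1 h2 hy => cases h1
      | closeL₂ l l' x y E F h1 h2 hy => cases h1
      | closeR₁ l l' x y E F h1 h2 hy => cases h1
      | closeR₂ l l' x y E F h1 h2 hy => cases h1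
    | comL₁ l l' x y E F h1 h2 => cases h1
    | comL₂ l l' x y E F h1 h2 => cases h1
    | comR₁ l l' x y E F h1 h2 => cases h1
    | comR₂ l l' x y E F h1 h2 => cases h1
    | closeL₁ l l' x y E F h1 h2 hy => cases h1
    | closeL₂ l l' x y E F h1 h2 hy => cases h1
    | closeR₁ l l' x y E F h1 h2 hy => cases h1
    | closeR₂ l l' x y E F h1 h2 hy => cases h1
  | open_ l x y E h hxy =>
    cases h with
    | parL l μ E F h hb => cases h
    | parR l μ E F h hb =>
      cases h with
      | parL l μ E F h hb => cases h
      | parR l μ E F h hb => cases h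

lemma deadB_eq (l : Label) : deadB l = .res 1 (.par .nil (.par .nil
    (.input 1 3 (l.1 ++ [false] ++ [true] ++ [true], l.2 + 1)
      (.output 0 3 (l.1 ++ [false] ++ [true] ++ [true], l.2 + 1 + 1) .nil)))) := by
  simp [deadB, labelWith]

lemma no_live_deadB {v μ} (l : Label) : ¬ Live v μ (deadB l) := by
  rw [deadB_eq]
  exact no_live_shape _ _

lemma live_buildB {v μ i k} (h : Live v μ (buildB i k)) : μ = .tau ∧ v.2 = i + k := by
  induction k generalizing i with
  | zero =>
    cases h with
    | rep l μ P P' hs => exact ⟨(stepB_body hs).1, rfl⟩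
  | succ k ih =>
    cases h with
    | parL l μ E F h hb => exact absurd h (no_live_deadB _)
    | parR l μ E F h hb =>
      obtain ⟨h1, h2⟩ := ih h
      exact ⟨h1, by omega⟩
    | comL₁ l l' x y E F h1 h2 => exact absurd h1 (no_live_deadB _)
    | comL₂ l l' x y E F h1 h2 => exact absurd h1 (no_live_deadB _)
    | comR₁ l l' x y E F h1 h2 => exact absurd h1 (no_live_deadB _)
    | comR₂ l l' x y E F h1 h2 => exact absurd h1 (no_live_deadB _)
    | closeL₁ l l' x y E F h1 h2 hy => exact absurd h1 (no_live_deadB _)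
    | closeL₂ l l' x y E F h1 h2 hy => exact absurd h1 (no_live_deadB _)
    | closeR₁ l l' x y E F h1 h2 hy => exact absurd h1 (no_live_deadB _)
    | closeR₂ l l' x y E F h1 h2 hy => exact absurd h1 (no_live_deadB _)

lemma live_buildC {v μ} : ∀ {m} {w l : Label}, w.2 = l.2 →
    Live v μ (buildC (.output 2 3 w .nil) l m) →
    (μ = .tau ∧ v.2 = m + l.2) ∨ (μ = .out 2 3) ∨ (∃ z, μ = .inp 2 z) := by
  intro m
  induction m with
  | zero =>
    intro w l he h
    cases h with
    | parL l μ E F h hb => cases h; exact Or.inr (Or.inl rfl)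
    | parR l μ E F h hb =>
      cases h with
      | rep l μ P P' hs =>
        obtain ⟨z, hμ, _⟩ := stepC_body hs
        exact Or.inr (Or.inr ⟨z, hμ⟩)
    | comL₁ l l' x y E F h1 h2 => cases h1
    | comL₂ l l' x y E F h1 h2 => cases h1
    | comR₁ l l' x y E F h1 h2 => cases h1; exact Or.inl ⟨rfl, by omega⟩
    | comR₂ l l' x y E F h1 h2 =>
      cases h1
      cases h2 with
      | rep l μ P P' hs => exact Or.inl ⟨rfl, by omega⟩
    | closeL₁ l l' x y E F h1 h2 hy => cases h1
    | closeL₂ l l' x y E F h1 h2 hy => cases h1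
    | closeR₁ l l' x y E F h1 h2 hy => cases h1
    | closeR₂ l l' x y E F h1 h2 hy => cases h1
  | succ m ih =>
    intro w l he h
    cases h with
    | parL l μ E F h hb => cases h
    | parR l2 μ2 E F h hb =>
      rcases ih (w := (l.1 ++ [false], l.2 + 1)) (l := nxt l) rfl h with
        ⟨h1, h2⟩ | h1 | h1
      · refine Or.inl ⟨h1, ?_⟩
        have : (nxt l).2 = l.2 + 1 := rfl
        omega
      · exact Or.inr (Or.inl h1)
      · exact Or.inr (Or.inr h1)
    | comL₁ l l' x y E F h1 h2 => cases h1
    | comL₂ l l' x y E F h1 h2 => cases h1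
    | comR₁ l l' x y E F h1 h2 => cases h1
    | comR₂ l l' x y E F h1 h2 => cases h1
    | closeL₁ l l' x y E F h1 h2 hy => cases h1
    | closeL₂ l l' x y E F h1 h2 hy => cases h1
    | closeR₁ l l' x y E F h1 h2 hy => cases h1
    | closeR₂ l l' x y E F h1 h2 hy => cases h1

lemma live_resC {v μ m} {w l : Label} (he : w.2 = l.2)
    (h : Live v μ (.res 2 (buildC (.output 2 3 w .nil) l m))) :
    μ = .tau ∧ v.2 = m + l.2 := by
  cases h with
  | res l' μ y E h hy =>
    rcases live_buildC he h with ⟨h1, h2⟩ | rfl | ⟨z, rfl⟩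
    · exact ⟨h1, h2⟩
    · exact absurd two_mem_out23 hy
    · exact absurd two_mem_inp2 hy
  | open_ l' x y E h hxy =>
    rcases live_buildC he h with ⟨h1, _⟩ | h1 | ⟨z, h1⟩ <;> simp at h1

lemma live_rho {v μ} (h : Live v μ rhoL) : ∃ z, μ = .inp 0 z := by
  cases h; exact ⟨_, rfl⟩

lemma live_S {v j} (h : Live v .tau (Sseq j)) : v.2 = bc j ∨ v.2 = cc j := by
  unfold Sseq at h
  cases h with
  | parL l μ E F h hb =>
    cases h with
    | parL l μ E F h hb =>
      obtain ⟨_, h2⟩ := live_buildB h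
      exact Or.inl (by omega)
    | parR l μ E F h hb =>
      obtain ⟨_, h2⟩ := live_resC (w := vC1) (l := vC2) rfl h
      have e : (vC2 : Label).2 = 0 := rfl
      exact Or.inr (by omega)
    | comL₁ l l' x y E F h1 h2 => obtain ⟨h', _⟩ := live_buildB h1; simp at h'
    | comL₂ l l' x y E F h1 h2 => obtain ⟨h', _⟩ := live_buildB h1; simp at h'
    | comR₁ l l' x y E F h1 h2 => obtain ⟨h', _⟩ := live_buildB h1; simp at h'
    | comR₂ l l' x y E F h1 h2 => obtain ⟨h', _⟩ := live_buildB h1; simp at h'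
    | closeL₁ l l' x y E F h1 h2 hy => obtain ⟨h', _⟩ := live_buildB h1; simp at h'
    | closeL₂ l l' x y E F h1 h2 hy => obtain ⟨h', _⟩ := live_buildB h1; simp at h'
    | closeR₁ l l' x y E F h1 h2 hy => obtain ⟨h', _⟩ := live_buildB h1; simp at h'
    | closeR₂ l l' x y E F h1 h2 hy => obtain ⟨h', _⟩ := live_buildB h1; simp at h'
  | parR l μ E F h hb => obtain ⟨z, hz⟩ := live_rho h; simp at hz
  | comL₁ l l' x y E F h1 h2 =>
    cases h1 with
    | parL l μ E F h hb => obtain ⟨h', _⟩ := live_buildB h; simp at h'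
    | parR l μ E F h hb => obtain ⟨h', _⟩ := live_resC (w := vC1) (l := vC2) rfl h; simp at h'
  | comL₂ l l' x y E F h1 h2 =>
    cases h1 with
    | parL l μ E F h hb => obtain ⟨h', _⟩ := live_buildB h; simp at h'
    | parR l μ E F h hb => obtain ⟨h', _⟩ := live_resC (w := vC1) (l := vC2) rfl h; simp at h'
  | comR₁ l l' x y E F h1 h2 =>
    cases h1 with
    | parL l μ E F h hb => obtain ⟨h', _⟩ := live_buildB h; simp at h'
    | parR l μ E F h hb => obtain ⟨h', _⟩ := live_resC (w := vC1) (l := vC2) rfl h; simp at h'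
  | comR₂ l l' x y E F h1 h2 =>
    cases h1 with
    | parL l μ E F h hb => obtain ⟨h', _⟩ := live_buildB h; simp at h'
    | parR l μ E F h hb => obtain ⟨h', _⟩ := live_resC (w := vC1) (l := vC2) rfl h; simp at h'
  | closeL₁ l l' x y E F h1 h2 hy =>
    cases h1 with
    | parL l μ E F h hb => obtain ⟨h', _⟩ := live_buildB h; simp at h'
    | parR l μ E F h hb => obtain ⟨h', _⟩ := live_resC (w := vC1) (l := vC2) rfl h; simp at h'
  | closeL₂ l l' x y E F h1 h2 hy =>
    cases h1 with
    | parL l μ E F h hb => obtain ⟨h', _⟩ := live_buildB h; simp at h'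
    | parR l μ E F h hb => obtain ⟨h', _⟩ := live_resC (w := vC1) (l := vC2) rfl h; simp at h'
  | closeR₁ l l' x y E F h1 h2 hy =>
    cases h1 with
    | parL l μ E F h hb => obtain ⟨h', _⟩ := live_buildB h; simp at h'
    | parR l μ E F h hb => obtain ⟨h', _⟩ := live_resC (w := vC1) (l := vC2) rfl h; simp at h'
  | closeR₂ l l' x y E F h1 h2 hy =>
    cases h1 with
    | parL l μ E F h hb => obtain ⟨h', _⟩ := live_buildB h; simp at h'
    | parR l μ E F h hb => obtain ⟨h', _⟩ := live_resC (w := vC1) (l := vC2) rfl h; simp at h'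

def compF : MaxComp LTauStep (.par FL rhoL) :=
  ⟨Sseq, rfl, fun i => Or.inl (sstep i)⟩

theorem sf_compF : StrongFair compF := by
  intro v
  refine ⟨2 * v.2 + 2, fun j hj hmem => ?_⟩
  have h : Live v .tau (Sseq j) := hmem
  rcases live_S h with h1 | h1
  · rw [show bc j = (j + 1) / 2 from rfl] at h1; omega
  · rw [show cc j = j / 2 from rfl] at h1; omega

theorem nsf_FL : ¬ SfMust FL rhoL := by
  intro hs
  obtain ⟨i, T, hstep⟩ := hs compF sf_compF
  exact lstep_omega hstep rfl (noTopO_S i)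

theorem nwf_FL : ¬ WfMust FL rhoL :=
  fun hw => nsf_FL (fun c hsf => hw c (sf_imp_wf hsf))

end PiFair

namespace PiFair

lemma wf_out (l : Label) (x y : Name) : Wf (.output x y l .nil) :=
  Wf.prefOut l x y .nil

lemma wf_rhoL : Wf rhoL := Wf.prefIn v3 0 3 (.omegaPre .nil)

lemma wf_AL0 : Wf AL0 := by
  refine Wf.res _ _ (Wf.par _ _ (wf_out vA 2 3) (Wf.rep vAr bodyA) ?_)
  intro l₀ h₀ l₁ h₁
  simp only [LProc.top, Set.mem_union, Set.mem_singleton_iff] at h₀ h₁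
  subst h₀; subst h₁
  exact ⟨by decide, by decide⟩

lemma wf_CL0 : Wf CL0 := by
  refine Wf.res _ _ (Wf.par _ _ (wf_out vC1 2 3) (Wf.rep vC2 bodyC) ?_)
  intro l₀ h₀ l₁ h₁
  simp only [LProc.top, Set.mem_union, Set.mem_singleton_iff] at h₀ h₁
  subst h₀; subst h₁
  exact ⟨by decide, by decide⟩

lemma wf_EL2 : Wf EL := by
  refine Wf.par _ _ wf_AL0 wf_CL0 ?_
  intro l₀ h₀ l₁ h₁
  simp only [LProc.top, Set.mem_union, Set.mem_singleton_iff] at h₀ h₁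
  rcases h₀ with rfl | rfl <;> rcases h₁ with rfl | rfl <;>
    exact ⟨by decide, by decide⟩

lemma wf_FL2 : Wf FL := by
  refine Wf.par _ _ (Wf.rep ([false], 0) bodyB) wf_CL0 ?_
  intro l₀ h₀ l₁ h₁
  simp only [LProc.top, Set.mem_union, Set.mem_singleton_iff] at h₀ h₁
  subst h₀
  rcases h₁ with rfl | rfl <;> exact ⟨by decide, by decide⟩

lemma wf_ELr : Wf (.par EL rhoL) := by
  refine Wf.par _ _ wf_EL2 wf_rhoL ?_
  intro l₀ h₀ l₁ h₁
  simp only [LProc.top, Set.mem_union, Set.mem_singleton_iff] at h₀ h₁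
  subst h₁
  rcases h₀ with ((rfl | rfl) | (rfl | rfl)) <;> exact ⟨by decide, by decide⟩

lemma wf_FLr : Wf (.par FL rhoL) := by
  refine Wf.par _ _ wf_FL2 wf_rhoL ?_
  intro l₀ h₀ l₁ h₁
  simp only [LProc.top, Set.mem_union, Set.mem_singleton_iff] at h₀ h₁
  subst h₁
  rcases h₀ with (rfl | (rfl | rfl)) <;> exact ⟨by decide, by decide⟩

lemma noOmega_EL : EL.noOmega := by
  simp [LProc.noOmega, Proc.noOmega]

lemma noOmega_FL : FL.noOmega := by
  simp [LProc.noOmega, Proc.noOmega]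

end PiFair

open PiFair in
/-- There are labeled processes with strongly bisimilar erasures which are
    neither sfmust- nor wfmust-equivalent; witnessed by
    E = (νc)(c̄ | !c.(c̄ | ā)) | (νc)(c̄ | !c.c̄),
    F = !((νb)(b̄ | b | b.ā)) | (νc)(c̄ | !c.c̄), and ρ = a.ω
    (names a := 0, b := 1, c := 2, dummy object name 3). -/
theorem bisimilar_not_fairmust_equiv :
    ∃ E F ρ : LProc,
      Wf E ∧ E.noOmega ∧ Wf F ∧ F.noOmega ∧ Wf ρ ∧
      Wf (.par E ρ) ∧ Wf (.par F ρ) ∧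
      E.unl = Proc.par
        (.res 2 (.par (.output 2 3 .nil)
          (.rep (.input 2 3 (.par (.output 2 3 .nil) (.output 0 3 .nil))))))
        (.res 2 (.par (.output 2 3 .nil) (.rep (.input 2 3 (.output 2 3 .nil))))) ∧
      F.unl = Proc.par
        (.rep (.res 1 (.par (.output 1 3 .nil)
          (.par (.input 1 3 .nil) (.input 1 3 (.output 0 3 .nil))))))
        (.res 2 (.par (.output 2 3 .nil) (.rep (.input 2 3 (.output 2 3 .nil))))) ∧
      ρ.unl = Proc.input 0 3 (.omegaPre .nil) ∧
      Bisimilar E.unl F.unl ∧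
      SfMust E ρ ∧ WfMust E ρ ∧ ¬ SfMust F ρ ∧ ¬ WfMust F ρ := by
  refine ⟨EL, FL, rhoL, wf_EL2, noOmega_EL, wf_FL2, noOmega_FL, wf_rhoL,
    wf_ELr, wf_FLr, rfl, rfl, rfl, bisim_EF, sf_EL, wf_EL, nsf_FL, nwf_FL⟩
end

section
/- For every choiceless π-calculus process P ∈ 𝒫 and every observer o ∈ 𝒪, if P must o then P fair o. -/
/- A formalization of the (choiceless) π-calculus with observers,
   its labeled version (à la Cacciagrano–Corradini–Palamidessi),
   fairness notions and testing semantics. -/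

namespace PiFair

/-- ω-enabledness persists under any non-ω transition. -/
lemma omega_persist : ∀ {T μ T₂}, Step T μ T₂ → μ ≠ .omega →
    (∃ T₁, Step T .omega T₁) → ∃ T₃, Step T₂ .omega T₃ := by
  intro T μ T₂ h
  induction h with
  | input x y z Pb =>
      intro _ hω; obtain ⟨T₁, hT₁⟩ := hω; cases hT₁
  | output x y Pb =>
      intro _ hω; obtain ⟨T₁, hT₁⟩ := hω; cases hT₁
  | open_ x y Pb P' hs hxy ih =>
      intro _ hω; obtain ⟨T₁, hT₁⟩ := hω
      cases hT₁ with
      | res _ _ _ _ hω' _ =>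
          exact ih (by simp) ⟨_, hω'⟩
  | res y μ Pb P' hs hy ih =>
      intro hμ hω; obtain ⟨T₁, hT₁⟩ := hω
      cases hT₁ with
      | res _ _ _ _ hω' _ =>
          obtain ⟨T₃, h3⟩ := ih hμ ⟨_, hω'⟩
          exact ⟨_, Step.res _ _ _ _ h3 (by simp [Act.n, Act.fnA, Act.bn])⟩
  | parL μ Pb P' Qb hs hbn ih =>
      intro hμ hω; obtain ⟨T₁, hT₁⟩ := hω
      cases hT₁ with
      | parL _ _ _ _ hω' _ =>
          obtain ⟨T₃, h3⟩ := ih hμ ⟨_, hω'⟩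
          exact ⟨_, Step.parL _ _ _ _ h3 (by simp [Act.bn])⟩
      | parR _ _ _ _ hω' _ =>
          exact ⟨_, Step.parR _ _ _ _ hω' (by simp [Act.bn])⟩
  | parR μ Pb Qb Q' hs hbn ih =>
      intro hμ hω; obtain ⟨T₁, hT₁⟩ := hω
      cases hT₁ with
      | parL _ _ _ _ hω' _ =>
          exact ⟨_, Step.parL _ _ _ _ hω' (by simp [Act.bn])⟩
      | parR _ _ _ _ hω' _ =>
          obtain ⟨T₃, h3⟩ := ih hμ ⟨_, hω'⟩
          exact ⟨_, Step.parR _ _ _ _ h3 (by simp [Act.bn])⟩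
  | comL x y Pb P' Qb Q' hs1 hs2 ih1 ih2 =>
      intro _ hω; obtain ⟨T₁, hT₁⟩ := hω
      cases hT₁ with
      | parL _ _ _ _ hω' _ =>
          obtain ⟨T₃, h3⟩ := ih1 (by simp) ⟨_, hω'⟩
          exact ⟨_, Step.parL _ _ _ _ h3 (by simp [Act.bn])⟩
      | parR _ _ _ _ hω' _ =>
          obtain ⟨T₃, h3⟩ := ih2 (by simp) ⟨_, hω'⟩
          exact ⟨_, Step.parR _ _ _ _ h3 (by simp [Act.bn])⟩
  | comR x y Pb P' Qb Q' hs1 hs2 ih1 ih2 =>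
      intro _ hω; obtain ⟨T₁, hT₁⟩ := hω
      cases hT₁ with
      | parL _ _ _ _ hω' _ =>
          obtain ⟨T₃, h3⟩ := ih1 (by simp) ⟨_, hω'⟩
          exact ⟨_, Step.parL _ _ _ _ h3 (by simp [Act.bn])⟩
      | parR _ _ _ _ hω' _ =>
          obtain ⟨T₃, h3⟩ := ih2 (by simp) ⟨_, hω'⟩
          exact ⟨_, Step.parR _ _ _ _ h3 (by simp [Act.bn])⟩
  | closeL x y Pb P' Qb Q' hs1 hs2 hyf ih1 ih2 =>
      intro _ hω; obtain ⟨T₁, hT₁⟩ := hω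
      cases hT₁ with
      | parL _ _ _ _ hω' _ =>
          obtain ⟨T₃, h3⟩ := ih1 (by simp) ⟨_, hω'⟩
          exact ⟨_, Step.res _ _ _ _ (Step.parL _ _ _ _ h3 (by simp [Act.bn]))
            (by simp [Act.n, Act.fnA, Act.bn])⟩
      | parR _ _ _ _ hω' _ =>
          obtain ⟨T₃, h3⟩ := ih2 (by simp) ⟨_, hω'⟩
          exact ⟨_, Step.res _ _ _ _ (Step.parR _ _ _ _ h3 (by simp [Act.bn]))
            (by simp [Act.n, Act.fnA, Act.bn])⟩
  | closeR x y Pb P' Qb Q' hs1 hs2 hyf ih1 ih2 =>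
      intro _ hω; obtain ⟨T₁, hT₁⟩ := hω
      cases hT₁ with
      | parL _ _ _ _ hω' _ =>
          exact ⟨_, Step.res _ _ _ _ (Step.parL _ _ _ _ hω' (by simp [Act.bn]))
            (by simp [Act.n, Act.fnA, Act.bn])⟩
      | parR _ _ _ _ hω' _ =>
          obtain ⟨T₃, h3⟩ := ih2 (by simp) ⟨_, hω'⟩
          exact ⟨_, Step.res _ _ _ _ (Step.parR _ _ _ _ h3 (by simp [Act.bn]))
            (by simp [Act.n, Act.fnA, Act.bn])⟩
  | rep μ Pb P' hs ih =>
      intro _ hω; obtain ⟨T₁, hT₁⟩ := hω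
      cases hT₁ with
      | rep _ _ _ hω' =>
          exact ⟨_, Step.parR _ _ _ _ (Step.rep _ _ _ hω') (by simp [Act.bn])⟩
  | omega_ Pb =>
      intro hμ _; exact absurd rfl hμ

/-- Extract a finite chain from a `TauStar` derivation. -/
lemma tauStar_exists_chain {A B : Proc} (h : TauStar A B) :
    ∃ (f : ℕ → Proc) (n : ℕ), f 0 = A ∧ f n = B ∧
      ∀ k < n, TauStep (f k) (f (k + 1)) := by
  induction h with
  | refl => exact ⟨fun _ => A, 0, rfl, rfl, by omega⟩
  | tail hAB hstep ih =>
      obtain ⟨f, n, h0, hn, hchain⟩ := ih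
      rename_i C
      refine ⟨fun k => if k ≤ n then f k else C, n + 1, by simp [h0], by simp, ?_⟩
      intro k hk
      by_cases hkn : k < n
      · have h1 : k ≤ n := le_of_lt hkn
        have h2 : k + 1 ≤ n := hkn
        simp only [h1, h2, if_true]
        exact hchain k hkn
      · have hk' : k = n := by omega
        subst hk'
        simp only [le_refl, if_true, Nat.lt_irrefl]
        have : ¬ (k + 1 ≤ k) := by omega
        simp only [this, if_false]
        rw [hn]; exact hstep

end PiFair
open PiFair in
/-- must implies fair-testing. -/
theorem must_imp_fair (P o : Proc) (hP : P.noOmega)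
    (h : Must P o) : FairT P o := by
  intro c i
  classical
  set Q := c.seq i with hQ
  have hreach : ∀ j, TauStar (Proc.par P o) (c.seq j) := by
    intro j; induction j with
    | zero =>
        rw [c.init]
        exact Relation.ReflTransGen.refl
    | succ j ih =>
        rcases c.succ j with hs | ⟨_, heq⟩
        · exact ih.tail hs
        · rwa [heq]
  obtain ⟨f, n, hf0, hfn, hchain⟩ := tauStar_exists_chain (hreach i)
  let next : Proc → Proc := fun T => if h : ∃ T', TauStep T T' then h.choose else T
  have hnext : ∀ T, TauStep T (next T) ∨ ((∀ T', ¬ TauStep T T') ∧ next T = T) := by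
    intro T
    by_cases hT : ∃ T', TauStep T T'
    · left
      have : next T = hT.choose := by simp [next, hT]
      rw [this]; exact hT.choose_spec
    · right
      exact ⟨fun T' hT' => hT ⟨T', hT'⟩, by simp [next, hT]⟩
  let g : ℕ → Proc := fun k => if k ≤ n then f k else next^[k - n] Q
  have hgn : ∀ k, n ≤ k → g k = next^[k - n] Q := by
    intro k hk
    rcases eq_or_lt_of_le hk with hk' | hk'
    · subst hk'
      simp [g, hfn, hQ]
    · have : ¬ (k ≤ n) := by omega
      simp [g, this]
  have hgsucc : ∀ k, TauStep (g k) (g (k + 1)) ∨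
      ((∀ t, ¬ TauStep (g k) t) ∧ g (k + 1) = g k) := by
    intro k
    by_cases hkn : k < n
    · left
      have h1 : k ≤ n := le_of_lt hkn
      have h2 : k + 1 ≤ n := hkn
      simp only [g, h1, h2, if_true]
      exact hchain k hkn
    · have hk : n ≤ k := by omega
      have e1 : g k = next^[k - n] Q := hgn k hk
      have e2 : g (k + 1) = next (next^[k - n] Q) := by
        rw [hgn (k + 1) (by omega)]
        have : k + 1 - n = (k - n) + 1 := by omega
        rw [this, Function.iterate_succ_apply']
      rcases hnext (next^[k - n] Q) with hs | ⟨hstuck, heq⟩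
      · left; rw [e1, e2]; exact hs
      · right
        constructor
        · rw [e1]; exact hstuck
        · rw [e1, e2, heq]
  have hg0 : g 0 = Proc.par P o := by simp [g, hf0]
  let c' : MaxComp TauStep (Proc.par P o) := ⟨g, hg0, hgsucc⟩
  obtain ⟨j, T', hjs⟩ := h c'
  have hc'seq : ∀ k, c'.seq k = g k := fun _ => rfl
  rw [hc'seq] at hjs
  -- ω-enabledness persists from j onward
  have hpers : ∀ k, j ≤ k → ∃ T', Step (g k) .omega T' := by
    intro k hk
    induction k, hk using Nat.le_induction with
    | base => exact ⟨T', hjs⟩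
    | succ k hk ih =>
        rcases hgsucc k with hs | ⟨_, heq⟩
        · exact omega_persist hs (by simp) ih
        · rwa [heq]
  -- every g k for k ≥ n is τ-reachable from Q
  have hstar : ∀ k, n ≤ k → TauStar Q (g k) := by
    intro k hk
    induction k, hk using Nat.le_induction with
    | base =>
        have : g n = Q := by simp [g, hfn, hQ]
        rw [this]
        exact Relation.ReflTransGen.refl
    | succ k hk ih =>
        rcases hgsucc k with hs | ⟨_, heq⟩
        · exact ih.tail hs
        · rwa [heq]
  obtain ⟨T₃, hT₃⟩ := hpers (max j n) (le_max_left _ _)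
  exact ⟨g (max j n), T₃, hstar (max j n) (le_max_right _ _), hT₃⟩
end

section
/- There exist a choiceless π-calculus process P ∈ 𝒫 and an observer o ∈ 𝒪 such that P fair o holds but P must o fails. In particular this holds for P = (νb)(b̄ | !b.b̄) | ā and o = a.ω. -/
/- A formalization of the (choiceless) π-calculus with observers,
   its labeled version (à la Cacciagrano–Corradini–Palamidessi),
   fairness notions and testing semantics. -/

namespace PiFair

/-! ### Auxiliary material for the counterexample -/

section Counterexample

/-- b̄3.0 -/
private def out1 : Proc := .output 1 3 .nil
/-- b(3).b̄3.0 -/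
private def inp1 : Proc := .input 1 3 out1
/-- !b(3).b̄3.0 -/
private def Rp : Proc := .rep inp1
/-- b̄3.0 | !b(3).b̄3.0 -/
private def core : Proc := .par out1 Rp

/-- States of the internal loop. -/
private def Sn : ℕ → Proc
  | 0 => core
  | n+1 => .par .nil (Sn n)

/-- the observer a(3).ω.0 -/
private def obs : Proc := .input 0 3 (.omegaPre .nil)
/-- left component (νb)(loop) | ā3.0 -/
private def Lp (n : ℕ) : Proc := .par (.res 1 (Sn n)) (.output 0 3 .nil)
/-- states before the a-communication -/
private def Tn (n : ℕ) : Proc := .par (Lp n) obs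
/-- states after the a-communication -/
private def Un (n : ℕ) : Proc := .par (.par (.res 1 (Sn n)) .nil) (.omegaPre .nil)

private lemma stepS : ∀ n μ X, Step (Sn n) μ X →
    μ = .out 1 3 ∨ (∃ z, μ = .inp 1 z) ∨ (μ = .tau ∧ X = Sn (n+1)) := by
  intro n
  induction n with
  | zero =>
    intro μ X h
    simp only [Sn, core, out1, Rp, inp1] at h
    cases h with
    | parL μ P P' Q hP _ => cases hP; exact Or.inl rfl
    | parR μ P Q Q' hQ _ =>
        cases hQ with
        | rep μ P P' hP => cases hP; exact Or.inr (Or.inl ⟨_, rfl⟩)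
    | comL x y P P' Q Q' hP hQ => cases hP
    | comR x y P P' Q Q' hP hQ =>
        cases hP
        cases hQ with
        | rep μ P P' hP' => cases hP'; exact Or.inr (Or.inr ⟨rfl, rfl⟩)
    | closeL x y P P' Q Q' hP hQ _ =>
        cases hQ with
        | rep μ P P' hP' => cases hP'
    | closeR x y P P' Q Q' hP hQ _ => cases hP
  | succ n ih =>
    intro μ X h
    simp only [Sn] at h
    cases h with
    | parL μ P P' Q hP _ => cases hP
    | parR μ P Q Q' hQ _ =>
        rcases ih μ _ hQ with h1 | ⟨z, h1⟩ | ⟨h1, h2⟩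
        · exact Or.inl h1
        · exact Or.inr (Or.inl ⟨z, h1⟩)
        · exact Or.inr (Or.inr ⟨h1, by rw [h2]; rfl⟩)
    | comL x y P P' Q Q' hP hQ => cases hP
    | comR x y P P' Q Q' hP hQ => cases hP
    | closeL x y P P' Q Q' hP hQ _ => cases hP
    | closeR x y P P' Q Q' hP hQ _ => cases hP

private lemma stepResS : ∀ n μ X, Step (.res 1 (Sn n)) μ X →
    μ = .tau ∧ X = .res 1 (Sn (n+1)) := by
  intro n μ X h
  cases h with
  | open_ x y P P' hP hxy =>
      rcases stepS n _ _ hP with h1 | ⟨z, h1⟩ | ⟨h1, _⟩ <;> cases h1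
  | res y μ P P' hP hy =>
      rcases stepS n _ _ hP with h1 | ⟨z, h1⟩ | ⟨h1, h2⟩
      · subst h1; exfalso; apply hy; simp [Act.n, Act.fnA, Act.bn]
      · subst h1; exfalso; apply hy; simp [Act.n, Act.fnA, Act.bn]
      · subst h1; exact ⟨rfl, by rw [h2]⟩

private lemma stepLp : ∀ n μ X, Step (Lp n) μ X →
    (μ = .tau ∧ X = Lp (n+1)) ∨ (μ = .out 0 3 ∧ X = .par (.res 1 (Sn n)) .nil) := by
  intro n μ X h
  simp only [Lp] at h
  cases h with
  | parL μ P P' Q hP _ =>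
      rcases stepResS n _ _ hP with ⟨h1, h2⟩
      subst h1; subst h2; exact Or.inl ⟨rfl, rfl⟩
  | parR μ P Q Q' hQ _ => cases hQ; exact Or.inr ⟨rfl, rfl⟩
  | comL x y P P' Q Q' hP hQ => rcases stepResS n _ _ hP with ⟨h1, _⟩; cases h1
  | comR x y P P' Q Q' hP hQ => rcases stepResS n _ _ hP with ⟨h1, _⟩; cases h1
  | closeL x y P P' Q Q' hP hQ _ => cases hQ
  | closeR x y P P' Q Q' hP hQ _ => rcases stepResS n _ _ hP with ⟨h1, _⟩; cases h1

private lemma tauT : ∀ n X, TauStep (Tn n) X → X = Tn (n+1) ∨ X = Un n := by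
  intro n X h
  simp only [Tn, obs] at h
  cases h with
  | parL μ P P' Q hP _ =>
      rcases stepLp n _ _ hP with ⟨_, h2⟩ | ⟨h1, _⟩
      · subst h2; exact Or.inl rfl
      · cases h1
  | parR μ P Q Q' hQ _ => cases hQ
  | comL x y P P' Q Q' hP hQ => cases hQ
  | comR x y P P' Q Q' hP hQ =>
      rcases stepLp n _ _ hP with ⟨h1, _⟩ | ⟨h1, h2⟩
      · cases h1
      · cases h1; subst h2; cases hQ; exact Or.inr rfl
  | closeL x y P P' Q Q' hP hQ _ => cases hQ
  | closeR x y P P' Q Q' hP hQ _ =>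
      rcases stepLp n _ _ hP with ⟨h1, _⟩ | ⟨h1, _⟩ <;> cases h1

private lemma tauU : ∀ n X, TauStep (Un n) X → X = Un (n+1) := by
  intro n X h
  simp only [Un] at h
  cases h with
  | parL μ P P' Q hP _ =>
      cases hP with
      | parL μ P P' Q hP' _ =>
          rcases stepResS n _ _ hP' with ⟨_, h2⟩; subst h2; rfl
      | parR μ P Q Q' hQ' _ => cases hQ'
      | comL x y P P' Q Q' hP' hQ' => cases hQ'
      | comR x y P P' Q Q' hP' hQ' => cases hQ'
      | closeL x y P P' Q Q' hP' hQ' _ => cases hQ'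
      | closeR x y P P' Q Q' hP' hQ' _ => cases hQ'
  | parR μ P Q Q' hQ _ => cases hQ
  | comL x y P P' Q Q' hP hQ => cases hQ
  | comR x y P P' Q Q' hP hQ => cases hQ
  | closeL x y P P' Q Q' hP hQ _ => cases hQ
  | closeR x y P P' Q Q' hP hQ _ => cases hQ

private lemma noOmegaT : ∀ n X, ¬ Step (Tn n) .omega X := by
  intro n X h
  simp only [Tn, obs] at h
  cases h with
  | parL μ P P' Q hP _ =>
      rcases stepLp n _ _ hP with ⟨h1, _⟩ | ⟨h1, _⟩ <;> cases h1
  | parR μ P Q Q' hQ _ => cases hQ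

private lemma omegaU : ∀ n, Step (Un n) .omega (.par (.par (.res 1 (Sn n)) .nil) .nil) := by
  intro n
  exact Step.parR _ _ _ _ (Step.omega_ _) (by simp [Act.bn])

private lemma stepTU : ∀ n, TauStep (Tn n) (Un n) := by
  intro n
  exact Step.comR 0 3 _ _ _ _
    (Step.parR _ _ _ _ (Step.output 0 3 .nil) (by simp [Act.bn]))
    (Step.input 0 3 3 (.omegaPre .nil))

private lemma stepSS : ∀ n, TauStep (Sn n) (Sn (n+1)) := by
  intro n
  induction n with
  | zero =>
      exact Step.comR 1 3 _ _ _ _ (Step.output 1 3 .nil)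
        (Step.rep _ _ _ (Step.input 1 3 3 out1))
  | succ n ih =>
      exact Step.parR _ _ _ _ ih (by simp [Act.bn])

private lemma stepTT : ∀ n, TauStep (Tn n) (Tn (n+1)) := by
  intro n
  exact Step.parL _ _ _ _
    (Step.parL _ _ _ _
      (Step.res 1 _ _ _ (stepSS n) (by simp [Act.n, Act.fnA, Act.bn]))
      (by simp [Act.bn]))
    (by simp [Act.bn])

end Counterexample

end PiFair
open PiFair in
/-- fair-testing does not imply must; witnessed by
    P = (νb)(b̄ | !b.b̄) | ā and o = a.ω
    (names a := 0, b := 1, dummy object name 3). -/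
theorem fair_not_imp_must :
    FairT
      (Proc.par
        (.res 1 (.par (.output 1 3 .nil) (.rep (.input 1 3 (.output 1 3 .nil)))))
        (.output 0 3 .nil))
      (Proc.input 0 3 (.omegaPre .nil)) ∧
    ¬ Must
      (Proc.par
        (.res 1 (.par (.output 1 3 .nil) (.rep (.input 1 3 (.output 1 3 .nil)))))
        (.output 0 3 .nil))
      (Proc.input 0 3 (.omegaPre .nil)) := by
  constructor
  · intro c i
    have inv : ∀ j, (∃ n, c.seq j = Tn n) ∨ (∃ n, c.seq j = Un n) := by
      intro j
      induction j with
      | zero => exact Or.inl ⟨0, c.init⟩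
      | succ j ih =>
        rcases c.succ j with hstep | ⟨_, heq⟩
        · rcases ih with ⟨n, hn⟩ | ⟨n, hn⟩
          · rw [hn] at hstep
            rcases tauT n _ hstep with h | h
            · exact Or.inl ⟨n+1, h⟩
            · exact Or.inr ⟨n, h⟩
          · rw [hn] at hstep
            exact Or.inr ⟨n+1, tauU n _ hstep⟩
        · rw [heq]; exact ih
    rcases inv i with ⟨n, hn⟩ | ⟨n, hn⟩
    · exact ⟨Un n, _, by rw [hn]; exact Relation.ReflTransGen.single (stepTU n), omegaU n⟩
    · exact ⟨Un n, _, by rw [hn]; exact Relation.ReflTransGen.refl, omegaU n⟩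
  · intro hmust
    rcases hmust ⟨Tn, rfl, fun i => Or.inl (stepTT i)⟩ with ⟨i, T', h⟩
    exact noOmegaT i T' h
end
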